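/- arXiv:2302.09001 — 5 statements merged into one kernel-verified Lean document; each statement's English description precedes it below -/
import Mathlib

section
/- Let D > 0, L₀ > 0, c ∈ ℝ and λ ∈ ℝ. Suppose φ : [0, L₀] → ℝ is twice continuously differentiable, φ(0) = φ(L₀) = 0, φ(ξ) > 0 for all ξ ∈ (0, L₀), and D φ''(ξ) + c φ'(ξ) + λ φ(ξ) = 0 for all ξ ∈ (0, L₀). Then λ = Dπ²/L₀² + c²/(4D). -/
/-!
With `a = c / (2D)` and `b = π / L₀`, the damped sine `g ξ = exp (-a ξ) sin (b ξ)` is a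
Dirichlet eigenfunction, positive on `(0, L₀)`, with eigenvalue `D (a² + b²)`. The weighted
Wronskian `W = exp (2a ξ) (φ' g - φ g')` vanishes at both endpoints, and its derivative is
`(a² + b² - λ / D) exp (2a ξ) φ g`. By Rolle this derivative vanishes somewhere inside, where
`φ g > 0`, so `λ = D (a² + b²)`.
-/

open Set Real

/-- `exp (p y)` is the integrating factor for the Wronskian of solutions of `y'' + p y' + μ y = 0`
and `y'' + p y' + ν y = 0`. -/
theorem hasDerivAt_exp_mul_wronskian {p μ ν x : ℝ} {f f' g g' : ℝ → ℝ}
    (hf : HasDerivAt f (f' x) x) (hf' : HasDerivAt f' (-(p * f' x) - μ * f x) x)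
    (hg : HasDerivAt g (g' x) x) (hg' : HasDerivAt g' (-(p * g' x) - ν * g x) x) :
    HasDerivAt (fun y => exp (p * y) * (f' y * g y - f y * g' y))
      ((ν - μ) * (exp (p * x) * (f x * g x))) x := by
  have h := ((hasDerivAt_id' x).const_mul p).exp.mul ((hf'.mul hg).sub (hf.mul hg'))
  exact h.congr_deriv (by simp only [Pi.sub_apply, Pi.mul_apply]; ring)

noncomputable def dampedSine (a b x : ℝ) : ℝ := exp (-a * x) * sin (b * x)

noncomputable def dampedSineDeriv (a b x : ℝ) : ℝ :=
  exp (-a * x) * (b * cos (b * x) - a * sin (b * x))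

theorem hasDerivAt_dampedSine (a b x : ℝ) :
    HasDerivAt (dampedSine a b) (dampedSineDeriv a b x) x := by
  have h := ((hasDerivAt_id' x).const_mul (-a)).exp.mul ((hasDerivAt_id' x).const_mul b).sin
  exact h.congr_deriv (by simp only [dampedSineDeriv]; ring)

theorem hasDerivAt_dampedSineDeriv (a b x : ℝ) :
    HasDerivAt (dampedSineDeriv a b)
      (-(2 * a * dampedSineDeriv a b x) - (a ^ 2 + b ^ 2) * dampedSine a b x) x := by
  have hlin := (hasDerivAt_id' x).const_mul b
  have h := ((hasDerivAt_id' x).const_mul (-a)).exp.mul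
    ((hlin.cos.const_mul b).sub (hlin.sin.const_mul a))
  exact h.congr_deriv (by simp only [dampedSine, dampedSineDeriv, Pi.sub_apply]; ring)

theorem continuous_dampedSine (a b : ℝ) : Continuous (dampedSine a b) := by
  unfold dampedSine; fun_prop

theorem continuous_dampedSineDeriv (a b : ℝ) : Continuous (dampedSineDeriv a b) := by
  unfold dampedSineDeriv; fun_prop

theorem dampedSine_pos {a b x : ℝ} (h0 : 0 < b * x) (hπ : b * x < π) : 0 < dampedSine a b x :=
  mul_pos (exp_pos _) (sin_pos_of_pos_of_lt_pi h0 hπ)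

section IccDeriv

variable {φ : ℝ → ℝ} {a b x : ℝ}

theorem DifferentiableOn.hasDerivAt_derivWithin_Icc (hφ : DifferentiableOn ℝ φ (Icc a b))
    (hx : x ∈ Ioo a b) : HasDerivAt φ (derivWithin φ (Icc a b) x) x := by
  rw [derivWithin_of_mem_nhds (Icc_mem_nhds hx.1 hx.2)]
  exact (hφ.differentiableAt (Icc_mem_nhds hx.1 hx.2)).hasDerivAt

theorem ContDiffOn.hasDerivAt_derivWithin_Icc_deriv {n : WithTop ℕ∞}
    (hφ : ContDiffOn ℝ n φ (Icc a b)) (hn : 2 ≤ n) (hx : x ∈ Ioo a b) :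
    HasDerivAt (derivWithin φ (Icc a b)) (deriv (deriv φ) x) x := by
  have hderiv : ContDiffOn ℝ 1 (deriv φ) (Ioo a b) :=
    (hφ.mono Ioo_subset_Icc_self).deriv_of_isOpen isOpen_Ioo (by rwa [one_add_one_eq_two])
  refine ((hderiv.contDiffAt (isOpen_Ioo.mem_nhds hx)).differentiableAt one_ne_zero)
    |>.hasDerivAt.congr_of_eventuallyEq ?_
  filter_upwards [isOpen_Ioo.mem_nhds hx] with y hy
  exact derivWithin_of_mem_nhds (Icc_mem_nhds hy.1 hy.2)

end IccDeriv

/-- If `φ` is C² on `[0, L₀]`, vanishes at the endpoints, is positive on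
`(0, L₀)`, and satisfies `D φ'' + c φ' + λ φ = 0` on `(0, L₀)`, then
`λ = Dπ²/L₀² + c²/(4D)`. -/
theorem stmt2 (D L₀ c lam : ℝ) (hD : 0 < D) (hL₀ : 0 < L₀)
    (φ : ℝ → ℝ) (hreg : ContDiffOn ℝ 2 φ (Icc 0 L₀))
    (hbc0 : φ 0 = 0) (hbcL : φ L₀ = 0)
    (hpos : ∀ ξ ∈ Ioo 0 L₀, 0 < φ ξ)
    (hode : ∀ ξ ∈ Ioo 0 L₀,
      D * deriv (deriv φ) ξ + c * deriv φ ξ + lam * φ ξ = 0) :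
    lam = D * π ^ 2 / L₀ ^ 2 + c ^ 2 / (4 * D) := by
  set a := c / (2 * D)
  set b := π / L₀
  have h2a : 2 * a = c / D := by simp only [a]; field_simp
  have hbL : b * L₀ = π := div_mul_cancel₀ π hL₀.ne'
  have hφ' : ∀ ξ ∈ Ioo 0 L₀, HasDerivAt (derivWithin φ (Icc 0 L₀))
      (-(2 * a * derivWithin φ (Icc 0 L₀) ξ) - lam / D * φ ξ) ξ := fun ξ hξ => by
    convert hreg.hasDerivAt_derivWithin_Icc_deriv le_rfl hξ using 1
    rw [derivWithin_of_mem_nhds (Icc_mem_nhds hξ.1 hξ.2), h2a]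
    field_simp
    linarith [hode ξ hξ]
  have hW := fun ξ hξ => hasDerivAt_exp_mul_wronskian
    ((hreg.differentiableOn two_ne_zero).hasDerivAt_derivWithin_Icc hξ) (hφ' ξ hξ)
    (hasDerivAt_dampedSine a b ξ) (hasDerivAt_dampedSineDeriv a b ξ)
  have hφc := hreg.continuousOn
  have hφ'c := hreg.continuousOn_derivWithin (uniqueDiffOn_Icc hL₀) one_le_two
  have hgc := continuous_dampedSine a b
  have hg'c := continuous_dampedSineDeriv a b
  obtain ⟨ξ, hξ, hW'ξ⟩ := exists_hasDerivAt_eq_zero hL₀ (by fun_prop)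
    (by simp [dampedSine, dampedSineDeriv, hbc0, hbcL, hbL]) hW
  have hg : 0 < dampedSine a b ξ := dampedSine_pos (mul_pos (by positivity) hξ.1)
    (hbL ▸ mul_lt_mul_of_pos_left hξ.2 (by positivity))
  have hμ : a ^ 2 + b ^ 2 - lam / D = 0 := by
    simpa [(hpos ξ hξ).ne', hg.ne', exp_ne_zero] using hW'ξ
  rw [show lam = D * (a ^ 2 + b ^ 2) by field_simp at hμ; linarith]
  simp only [a, b]
  field_simp
  ring
end

section
/- Let D₁, D₂ > 0, r₁, r₂ > 0, ĥ₁, ĥ₂ > 0, n > 0 and L₀ > 0, and assume r₂/r₁ ≥ D₂/D₁. Suppose U₁ : [0, L₀] → ℝ is twice continuously differentiable, 0 ≤ U₁(ξ) ≤ r₁^{1/n}/ĥ₁ for all ξ, and D₁ U₁''(ξ) + U₁(ξ)(r₁ − (ĥ₁ U₁(ξ))ⁿ) = 0 for all ξ ∈ (0, L₀). Set a = (r₂/r₁)^{1/n} ĥ₁/ĥ₂ and w = a U₁. Then D₂ w''(ξ) + w(ξ)(r₂ − (ĥ₂ w(ξ))ⁿ) ≥ 0 for all ξ ∈ (0, L₀).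 -/
open Set Real

/-- If `0 ≤ U₁ ≤ r₁^{1/n}/ĥ₁` solves `D₁ U₁'' + U₁(r₁ − (ĥ₁U₁)ⁿ) = 0`
on `(0, L₀)` and `r₂/r₁ ≥ D₂/D₁`, then `w = a U₁` with `a = (r₂/r₁)^{1/n} ĥ₁/ĥ₂` is a
subsolution of the second species' stationary equation:
`D₂ w'' + w(r₂ − (ĥ₂w)ⁿ) ≥ 0` on `(0, L₀)`. -/
theorem stmt10 (D₁ D₂ r₁ r₂ hhat₁ hhat₂ n L₀ : ℝ)
    (hD₁ : 0 < D₁) (hD₂ : 0 < D₂) (hr₁ : 0 < r₁) (hr₂ : 0 < r₂)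
    (hh₁ : 0 < hhat₁) (hh₂ : 0 < hhat₂) (hn : 0 < n) (hL₀ : 0 < L₀)
    (hratio : D₂ / D₁ ≤ r₂ / r₁)
    (U₁ : ℝ → ℝ) (hreg : ContDiffOn ℝ 2 U₁ (Icc 0 L₀))
    (hU₁nonneg : ∀ ξ ∈ Icc 0 L₀, 0 ≤ U₁ ξ)
    (hU₁bd : ∀ ξ ∈ Icc 0 L₀, U₁ ξ ≤ r₁ ^ (1 / n) / hhat₁)
    (hode : ∀ ξ ∈ Ioo 0 L₀,
      D₁ * deriv (deriv U₁) ξ + U₁ ξ * (r₁ - (hhat₁ * U₁ ξ) ^ n) = 0)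
    (a : ℝ) (ha : a = (r₂ / r₁) ^ (1 / n) * hhat₁ / hhat₂)
    (w : ℝ → ℝ) (hw : ∀ ξ : ℝ, w ξ = a * U₁ ξ) :
    ∀ ξ ∈ Ioo 0 L₀,
      0 ≤ D₂ * deriv (deriv w) ξ + w ξ * (r₂ - (hhat₂ * w ξ) ^ n) := by
  intro ξ hξ
  have hξ' : ξ ∈ Icc 0 L₀ := Ioo_subset_Icc_self hξ
  have hwfun : w = fun x => a * U₁ x := funext hw
  have hderiv2 : deriv (deriv w) ξ = a * deriv (deriv U₁) ξ := by
    rw [hwfun]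
    have h1 : deriv (fun x => a * U₁ x) = fun x => a * deriv U₁ x :=
      funext fun x => deriv_const_mul_field a
    rw [h1]
    exact deriv_const_mul_field a
  have ha0 : 0 ≤ a := by rw [ha]; positivity
  have hu0 : 0 ≤ U₁ ξ := hU₁nonneg ξ hξ'
  set u := U₁ ξ with hu
  have hub : hhat₁ * u ≤ r₁ ^ (1 / n) := by
    have h := hU₁bd ξ hξ'
    rw [le_div_iff₀ hh₁] at h
    linarith [h, mul_comm u hhat₁]
  set t : ℝ := (hhat₁ * u) ^ n with ht
  have ht0 : 0 ≤ t := by positivity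
  have htle : t ≤ r₁ := by
    calc t ≤ (r₁ ^ (1 / n)) ^ n :=
          Real.rpow_le_rpow (by positivity) hub hn.le
      _ = r₁ := by
          rw [← Real.rpow_mul hr₁.le, one_div_mul_cancel hn.ne', Real.rpow_one]
  have hkey : (hhat₂ * w ξ) ^ n = (r₂ / r₁) * t := by
    have h1 : hhat₂ * w ξ = (r₂ / r₁) ^ (1 / n) * (hhat₁ * u) := by
      rw [hw, ha]; field_simp; ring
    rw [h1, Real.mul_rpow (by positivity) (by positivity),
      ← Real.rpow_mul (by positivity), one_div_mul_cancel hn.ne', Real.rpow_one]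
  have hX : deriv (deriv U₁) ξ = -(u * (r₁ - t)) / D₁ := by
    have h := hode ξ hξ
    field_simp
    linarith
  rw [hderiv2, hX, hkey, hw ξ, ← hu]
  have heq : D₂ * (a * (-(u * (r₁ - t)) / D₁)) + a * u * (r₂ - r₂ / r₁ * t)
      = a * u * (r₁ - t) * (r₂ / r₁ - D₂ / D₁) := by
    field_simp; ring
  rw [heq]
  have h2 : 0 ≤ r₂ / r₁ - D₂ / D₁ := by linarith
  exact mul_nonneg (mul_nonneg (mul_nonneg ha0 hu0) (by linarith)) h2
end

section
/- Let D₁, D₂ > 0, r₁, r₂ > 0, ĥ₁, ĥ₂, ĝ₂ > 0, n > 0 and L₀ > 0. Suppose U₁, U₂ : [0, L₀] → ℝ are twice continuously differentiable, with Uᵢ(0) = Uᵢ(L₀) = 0, Uᵢ(ξ) > 0 for ξ ∈ (0, L₀), D₁ U₁''(ξ) + U₁(ξ)(r₁ − (ĥ₁ U₁(ξ))ⁿ) = 0 and D₂ U₂''(ξ) + U₂(ξ)(r₂ − (ĥ₂ U₂(ξ))ⁿ) = 0 for all ξ ∈ (0, L₀). If r₂/r₁ ≥ D₂/D₁ and (r₂/r₁)^{1/n}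 ĥ₁ ≥ ĝ₂, then ĝ₂ U₁(ξ) ≤ ĥ₂ U₂(ξ) for all ξ ∈ [0, L₀]. -/
/-!
Rescaling the first state, `V = A U₁` with `A = (r₂/r₁)^{1/n} ĥ₁ / ĥ₂`, turns the equation of `U₁`
into that of `U₂` up to the term `A (r₂/r₁ - D₂/D₁) U₁ (r₁ - (ĥ₁U₁)ⁿ)`, which is nonnegative since
`(ĥ₁U₁)ⁿ ≤ r₁` by the maximum principle: `V` is a subsolution of the equation of `U₂`. Then `V ≤ U₂`
by sweeping with `t V`: if `T = sup {t ≤ 1 | t V ≤ U₂} < 1`, strict sublinearity of the reaction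
(`u ↦ r₂ - (ĥ₂u)ⁿ` is decreasing) forbids an interior contact of `T V` with `U₂`, and the
one-dimensional Hopf lemma gives `U₂ - T V` nonzero slopes at both ends, so `T` can be increased.
Finally `ĝ₂ U₁ ≤ ĥ₂ V ≤ ĥ₂ U₂`.
-/

open Set Real Filter Topology

structure HasContDerivOn (u u' : ℝ → ℝ) (a b : ℝ) : Prop where
  continuousOn : ContinuousOn u (Icc a b)
  continuousOn_deriv : ContinuousOn u' (Icc a b)
  hasDerivAt : ∀ x ∈ Ioo a b, HasDerivAt u (u' x) x

structure HasSecondDerivOn (u u' u'' : ℝ → ℝ) (a b : ℝ) : Prop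
    extends HasContDerivOn u u' a b where
  hasDerivAt_deriv : ∀ x ∈ Ioo a b, HasDerivAt u' (u'' x) x

section Reflection

variable {a b : ℝ}

theorem mapsTo_reflect_Icc : MapsTo (fun x => a + b - x) (Icc a b) (Icc a b) :=
  fun _ hx => ⟨by linarith [hx.2], by linarith [hx.1]⟩

theorem mapsTo_reflect_Ioo : MapsTo (fun x => a + b - x) (Ioo a b) (Ioo a b) :=
  fun _ hx => ⟨by linarith [hx.2], by linarith [hx.1]⟩

theorem HasDerivAt.comp_reflect {u : ℝ → ℝ} {d x : ℝ} (hu : HasDerivAt u d (a + b - x)) :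
    HasDerivAt (fun x => u (a + b - x)) (-d) x := by
  have h := hu.comp x ((hasDerivAt_id x).const_sub (a + b))
  rwa [mul_neg, mul_one] at h

end Reflection

namespace HasContDerivOn

variable {u u' v v' : ℝ → ℝ} {a b : ℝ}

theorem sub (hu : HasContDerivOn u u' a b) (hv : HasContDerivOn v v' a b) :
    HasContDerivOn (fun x => u x - v x) (fun x => u' x - v' x) a b where
  continuousOn := hu.continuousOn.sub hv.continuousOn
  continuousOn_deriv := hu.continuousOn_deriv.sub hv.continuousOn_deriv
  hasDerivAt x hx := (hu.hasDerivAt x hx).sub (hv.hasDerivAt x hx)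

theorem const_mul (hu : HasContDerivOn u u' a b) (c : ℝ) :
    HasContDerivOn (fun x => c * u x) (fun x => c * u' x) a b where
  continuousOn := hu.continuousOn.const_smul c
  continuousOn_deriv := hu.continuousOn_deriv.const_smul c
  hasDerivAt x hx := (hu.hasDerivAt x hx).const_mul c

theorem reflect (hu : HasContDerivOn u u' a b) :
    HasContDerivOn (fun x => u (a + b - x)) (fun x => -u' (a + b - x)) a b where
  continuousOn := hu.continuousOn.comp (by fun_prop) mapsTo_reflect_Icc
  continuousOn_deriv := (hu.continuousOn_deriv.comp (by fun_prop) mapsTo_reflect_Icc).neg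
  hasDerivAt x hx := (hu.hasDerivAt _ (mapsTo_reflect_Ioo hx)).comp_reflect

end HasContDerivOn

namespace HasSecondDerivOn

variable {u u' u'' v v' v'' : ℝ → ℝ} {a b : ℝ}

theorem sub (hu : HasSecondDerivOn u u' u'' a b) (hv : HasSecondDerivOn v v' v'' a b) :
    HasSecondDerivOn (fun x => u x - v x) (fun x => u' x - v' x) (fun x => u'' x - v'' x) a b where
  toHasContDerivOn := hu.toHasContDerivOn.sub hv.toHasContDerivOn
  hasDerivAt_deriv x hx := (hu.hasDerivAt_deriv x hx).sub (hv.hasDerivAt_deriv x hx)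

theorem const_mul (hu : HasSecondDerivOn u u' u'' a b) (c : ℝ) :
    HasSecondDerivOn (fun x => c * u x) (fun x => c * u' x) (fun x => c * u'' x) a b where
  toHasContDerivOn := hu.toHasContDerivOn.const_mul c
  hasDerivAt_deriv x hx := (hu.hasDerivAt_deriv x hx).const_mul c

theorem reflect (hu : HasSecondDerivOn u u' u'' a b) :
    HasSecondDerivOn (fun x => u (a + b - x)) (fun x => -u' (a + b - x))
      (fun x => u'' (a + b - x)) a b where
  toHasContDerivOn := hu.toHasContDerivOn.reflect
  hasDerivAt_deriv x hx := by
    simpa using (hu.hasDerivAt_deriv _ (mapsTo_reflect_Ioo hx)).comp_reflect.fun_neg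

end HasSecondDerivOn

theorem ContDiffOn.hasSecondDerivOn {u : ℝ → ℝ} {a b : ℝ} (hab : a < b)
    (hu : ContDiffOn ℝ 2 u (Icc a b)) :
    HasSecondDerivOn u (derivWithin u (Icc a b)) (deriv (deriv u)) a b := by
  have hu' : ContDiffOn ℝ 1 (derivWithin u (Icc a b)) (Icc a b) :=
    hu.derivWithin (uniqueDiffOn_Icc hab) (by norm_num)
  have heq : ∀ x ∈ Ioo a b, derivWithin u (Icc a b) =ᶠ[𝓝 x] deriv u := fun x hx =>
    eventually_of_mem (Ioo_mem_nhds hx.1 hx.2) fun y hy =>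
      derivWithin_of_mem_nhds (Icc_mem_nhds hy.1 hy.2)
  refine ⟨⟨hu.continuousOn, hu'.continuousOn, fun x hx => ?_⟩, fun x hx => ?_⟩
  · rw [(heq x hx).eq_of_nhds]
    exact ((hu.differentiableOn (by norm_num) x (Ioo_subset_Icc_self hx)).differentiableAt
      (Icc_mem_nhds hx.1 hx.2)).hasDerivAt
  · rw [← (heq x hx).deriv_eq]
    exact ((hu'.differentiableOn one_ne_zero x (Ioo_subset_Icc_self hx)).differentiableAt
      (Icc_mem_nhds hx.1 hx.2)).hasDerivAt

theorem nonpos_of_hasDerivAt_le_mul {f f' : ℝ → ℝ} {a b c : ℝ} (hf : ContinuousOn f (Icc a b))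
    (hderiv : ∀ x ∈ Ioo a b, HasDerivAt f (f' x) x) (hle : ∀ x ∈ Ioo a b, f' x ≤ c * f x)
    (ha : f a ≤ 0) : ∀ x ∈ Icc a b, f x ≤ 0 := by
  have hanti : AntitoneOn (fun x => exp (-c * x) * f x) (Icc a b) := by
    refine antitoneOn_of_hasDerivWithinAt_nonpos (convex_Icc a b) (by fun_prop)
      (f' := fun x => exp (-c * x) * (f' x - c * f x)) (fun x hx => ?_) (fun x hx => ?_)
      <;> rw [interior_Icc] at hx
    · exact ((((hasDerivAt_id' x).const_mul (-c)).exp.mul (hderiv x hx)).congr_deriv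
        (by ring)).hasDerivWithinAt
    · exact mul_nonpos_of_nonneg_of_nonpos (exp_pos _).le (by linarith [hle x hx])
  intro x hx
  have h := hanti (left_mem_Icc.2 (hx.1.trans hx.2)) hx hx.1
  have : exp (-c * a) * f a ≤ 0 := mul_nonpos_of_nonneg_of_nonpos (exp_pos _).le ha
  exact nonpos_of_mul_nonpos_right (h.trans this) (exp_pos _)

namespace HasSecondDerivOn

variable {u u' u'' : ℝ → ℝ} {a b K : ℝ}

theorem nonpos_of_deriv_nonpos (hu : HasSecondDerivOn u u' u'' a b) (hK : 0 ≤ K)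
    (ha : u a = 0) (h'a : u' a ≤ 0) (hle : ∀ x ∈ Ioo a b, u'' x ≤ K * u x) :
    ∀ x ∈ Icc a b, u x ≤ 0 := by
  set k := √K
  have hk : k * k = K := mul_self_sqrt hK
  -- `u'' - K u` factors as `(∂ + k)(∂ - k) u`
  have hfirst : ∀ x ∈ Icc a b, u' x - k * u x ≤ 0 :=
    nonpos_of_hasDerivAt_le_mul (c := -k)
      (hu.continuousOn_deriv.sub (hu.continuousOn.const_smul k))
      (fun x hx => (hu.hasDerivAt_deriv x hx).sub ((hu.hasDerivAt x hx).const_mul k))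
      (fun x hx => by rw [← hk] at hle; linarith [hle x hx]) (by simp [ha, h'a])
  exact nonpos_of_hasDerivAt_le_mul hu.continuousOn hu.hasDerivAt
    (fun x hx => by linarith [hfirst x (Ioo_subset_Icc_self hx)]) ha.le

/-- The one-dimensional Hopf lemma. -/
theorem deriv_left_pos (hu : HasSecondDerivOn u u' u'' a b) (hK : 0 ≤ K) (ha : u a = 0)
    (hle : ∀ x ∈ Ioo a b, u'' x ≤ K * u x) (hpos : ∃ x ∈ Icc a b, 0 < u x) : 0 < u' a := by
  by_contra! h'a
  obtain ⟨x, hx, hux⟩ := hpos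
  linarith [hu.nonpos_of_deriv_nonpos hK ha h'a hle x hx]

theorem deriv_right_neg (hu : HasSecondDerivOn u u' u'' a b) (hK : 0 ≤ K) (hb : u b = 0)
    (hle : ∀ x ∈ Ioo a b, u'' x ≤ K * u x) (hpos : ∃ x ∈ Icc a b, 0 < u x) : u' b < 0 := by
  obtain ⟨x, hx, hux⟩ := hpos
  have h := hu.reflect.deriv_left_pos hK (by simpa using hb)
    (fun y hy => hle _ (mapsTo_reflect_Ioo hy))
    ⟨a + b - x, mapsTo_reflect_Icc hx, by simpa using hux⟩
  simpa using h

end HasSecondDerivOn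

theorem IsLocalMax.hasDerivAt_deriv_nonpos {f f' : ℝ → ℝ} {x c : ℝ} (hmax : IsLocalMax f x)
    (hf : ∀ᶠ y in 𝓝 x, HasDerivAt f (f' y) y) (hf' : HasDerivAt f' c x) : c ≤ 0 := by
  by_contra! hc
  have hx : f' x = 0 := hmax.hasDerivAt_eq_zero hf.self_of_nhds
  have hpos : ∀ᶠ y in 𝓝[>] x, 0 < f' y := by
    have hslope := (hasDerivAt_iff_tendsto_slope.1 hf').mono_left (nhdsGT_le_nhdsNE x)
    filter_upwards [hslope.eventually (eventually_gt_nhds hc), self_mem_nhdsWithin] with y hy hxy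
    rw [slope_def_field, hx, sub_zero] at hy
    exact (div_pos_iff_of_pos_right (sub_pos.2 hxy)).1 hy
  obtain ⟨u, hxu, hsub⟩ := mem_nhdsGT_iff_exists_Ioo_subset.1
    (hpos.and (nhdsWithin_le_nhds (hf.and hmax)))
  obtain ⟨y, hxy, hyu⟩ := nonempty_Ioo.2 (show x < u from hxu)
  have hmono : StrictMonoOn f (Icc x y) := by
    refine strictMonoOn_of_hasDerivWithinAt_pos (convex_Icc x y) (f' := f') (fun z hz => ?_)
      (fun z hz => ?_) (fun z hz => ?_) <;> try rw [interior_Icc] at hz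
    · rcases hz.1.eq_or_lt with rfl | hxz
      · exact hf.self_of_nhds.continuousAt.continuousWithinAt
      · exact (hsub ⟨hxz, hz.2.trans_lt hyu⟩).2.1.continuousAt.continuousWithinAt
    · exact (hsub ⟨hz.1, hz.2.trans hyu⟩).2.1.hasDerivWithinAt
    · exact (hsub ⟨hz.1, hz.2.trans hyu⟩).1
  exact (hmono (left_mem_Icc.2 hxy.le) (right_mem_Icc.2 hxy.le) hxy).not_ge
    (hsub ⟨hxy, hyu⟩).2.2

theorem IsLocalMin.hasDerivAt_deriv_nonneg {f f' : ℝ → ℝ} {x c : ℝ} (hmin : IsLocalMin f x)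
    (hf : ∀ᶠ y in 𝓝 x, HasDerivAt f (f' y) y) (hf' : HasDerivAt f' c x) : 0 ≤ c :=
  neg_nonpos.1 (hmin.neg.hasDerivAt_deriv_nonpos (hf.mono fun _ h => h.neg) hf'.neg)

namespace HasContDerivOn

variable {f f' : ℝ → ℝ} {a b : ℝ}

theorem exists_nonneg_of_deriv_left_pos (hf : HasContDerivOn f f' a b) (hab : a ≤ b)
    (ha : f a = 0) (h'a : 0 < f' a) : ∃ η > 0, ∀ x ∈ Icc a b, x < a + η → 0 ≤ f x := by
  obtain ⟨η, hη, hball⟩ := Metric.mem_nhdsWithin_iff.1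
    ((hf.continuousOn_deriv a (left_mem_Icc.2 hab)).eventually (lt_mem_nhds h'a))
  refine ⟨η, hη, fun x hx hxη => ?_⟩
  have hmono : MonotoneOn f (Icc a x) := by
    refine monotoneOn_of_hasDerivWithinAt_nonneg (convex_Icc a x) (f' := f')
      (hf.continuousOn.mono (Icc_subset_Icc_right hx.2)) (fun z hz => ?_) (fun z hz => ?_)
      <;> rw [interior_Icc] at hz
    · exact (hf.hasDerivAt z ⟨hz.1, hz.2.trans_le hx.2⟩).hasDerivWithinAt
    · refine (hball ⟨?_, hz.1.le, hz.2.le.trans hx.2⟩).le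
      rw [Metric.mem_ball, dist_eq, abs_of_pos (sub_pos.2 hz.1)]
      linarith [hz.2]
  simpa [ha] using hmono (left_mem_Icc.2 hx.1) (right_mem_Icc.2 hx.1) hx.1

theorem exists_nonneg_of_deriv_right_neg (hf : HasContDerivOn f f' a b) (hab : a ≤ b)
    (hb : f b = 0) (h'b : f' b < 0) : ∃ η > 0, ∀ x ∈ Icc a b, b - η < x → 0 ≤ f x := by
  obtain ⟨η, hη, h⟩ := hf.reflect.exists_nonneg_of_deriv_left_pos hab (by simpa using hb)
    (by simpa using h'b)
  refine ⟨η, hη, fun x hx hxη => ?_⟩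
  simpa using h (a + b - x) (mapsTo_reflect_Icc hx) (by linarith)

theorem exists_pos_mul_le {g g' : ℝ → ℝ} (hf : HasContDerivOn f f' a b)
    (hg : HasContDerivOn g g' a b) (hab : a ≤ b) (hfa : f a = 0) (hfb : f b = 0)
    (hga : g a = 0) (hgb : g b = 0) (hfpos : ∀ x ∈ Ioo a b, 0 < f x)
    (hgnn : ∀ x ∈ Icc a b, 0 ≤ g x) (h'a : 0 < f' a) (h'b : f' b < 0) :
    ∃ ε > 0, ∀ x ∈ Icc a b, ε * g x ≤ f x := by
  set ε₁ := f' a / (|g' a| + 1)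
  have hε₁ : 0 < ε₁ := by positivity
  obtain ⟨η₁, hη₁, hleft⟩ := (hf.sub (hg.const_mul ε₁)).exists_nonneg_of_deriv_left_pos hab
    (by simp [hfa, hga]) (by
      have : ε₁ * (|g' a| + 1) = f' a := div_mul_cancel₀ _ (by positivity)
      nlinarith [le_abs_self (g' a)])
  set ε₂ := -f' b / (|g' b| + 1)
  have hε₂ : 0 < ε₂ := div_pos (neg_pos.2 h'b) (by positivity)
  obtain ⟨η₂, hη₂, hright⟩ := (hf.sub (hg.const_mul ε₂)).exists_nonneg_of_deriv_right_neg hab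
    (by simp [hfb, hgb]) (by
      have : ε₂ * (|g' b| + 1) = -f' b := div_mul_cancel₀ _ (by positivity)
      nlinarith [neg_abs_le (g' b)])
  obtain ⟨m, hm, hmf⟩ := isCompact_Icc.exists_forall_le' (a := 0)
    (hf.continuousOn.mono (Icc_subset_Icc (by linarith) (by linarith)))
    (fun x hx => hfpos x ⟨by linarith [hx.1], by linarith [hx.2]⟩ :
      ∀ x ∈ Icc (a + η₁) (b - η₂), 0 < f x)
  obtain ⟨B, hB⟩ := isCompact_Icc.bddAbove_image hg.continuousOn
  set ε₃ := m / max B 1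
  have hε₃ : 0 < ε₃ := div_pos hm (by positivity)
  refine ⟨min ε₁ (min ε₂ ε₃), lt_min hε₁ (lt_min hε₂ hε₃), fun x hx => ?_⟩
  have hε := min_le_left ε₁ (min ε₂ ε₃)
  have hε' := min_le_right ε₁ (min ε₂ ε₃)
  have hgx := hgnn x hx
  rcases lt_or_ge x (a + η₁) with hx₁ | hx₁
  · nlinarith [hleft x hx hx₁]
  rcases lt_or_ge (b - η₂) x with hx₂ | hx₂
  · nlinarith [hright x hx hx₂, min_le_left ε₂ ε₃]
  calc min ε₁ (min ε₂ ε₃) * g x ≤ ε₃ * max B 1 :=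
        mul_le_mul (hε'.trans (min_le_right _ _)) ((hB (mem_image_of_mem g hx)).trans
          (le_max_left B 1)) hgx hε₃.le
    _ = m := div_mul_cancel₀ _ (by positivity)
    _ ≤ f x := hmf x ⟨hx₁, hx₂⟩

end HasContDerivOn

theorem nonneg_Icc_of_pos_Ioo {u : ℝ → ℝ} {a b : ℝ} (ha : u a = 0) (hb : u b = 0)
    (hpos : ∀ x ∈ Ioo a b, 0 < u x) : ∀ x ∈ Icc a b, 0 ≤ u x := by
  intro x hx
  rcases hx.1.eq_or_lt with rfl | hax
  · exact ha.ge
  rcases hx.2.eq_or_lt with rfl | hxb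
  · exact hb.ge
  exact (hpos x ⟨hax, hxb⟩).le

theorem exists_deriv2_sub_le_mul {U U'' Y Y'' f : ℝ → ℝ} {a b D : ℝ}
    (hU : ContinuousOn U (Icc a b)) (hD : 0 < D)
    (hf : AntitoneOn f (Ici 0)) (hlip : LocallyLipschitzOn (Ici 0) fun u => u * f u)
    (hUnn : ∀ x ∈ Icc a b, 0 ≤ U x) (hYnn : ∀ x ∈ Icc a b, 0 ≤ Y x)
    (hsuper : ∀ x ∈ Ioo a b, D * U'' x + U x * f (U x) ≤ 0)
    (hsub : ∀ x ∈ Ioo a b, 0 ≤ D * Y'' x + Y x * f (Y x)) {T : ℝ} (hT0 : 0 ≤ T) (hT1 : T ≤ 1)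
    (hle : ∀ x ∈ Icc a b, T * Y x ≤ U x) :
    ∃ K, 0 ≤ K ∧ ∀ x ∈ Ioo a b, U'' x - T * Y'' x ≤ K * (U x - T * Y x) := by
  obtain ⟨M, hM⟩ := isCompact_Icc.bddAbove_image hU
  obtain ⟨L, hL⟩ := (hlip.mono (show Icc 0 M ⊆ Ici 0 from Icc_subset_Ici_self))
    |>.exists_lipschitzOnWith_of_compact isCompact_Icc
  refine ⟨L / D, by positivity, fun x hx => ?_⟩
  have hx' := Ioo_subset_Icc_self hx
  have hTY : 0 ≤ T * Y x := mul_nonneg hT0 (hYnn x hx')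
  have hrate : f (Y x) ≤ f (T * Y x) :=
    hf hTY (hYnn x hx') (mul_le_of_le_one_left (hYnn x hx') hT1)
  have hlipx : T * Y x * f (T * Y x) - U x * f (U x) ≤ L * (U x - T * Y x) := by
    have h := hL.dist_le_mul (T * Y x) ⟨hTY, (hle x hx').trans (hM (mem_image_of_mem U hx'))⟩
      (U x) ⟨hUnn x hx', hM (mem_image_of_mem U hx')⟩
    rw [dist_eq, dist_eq, abs_sub_comm (T * Y x), abs_of_nonneg (sub_nonneg.2 (hle x hx'))] at h
    exact (le_abs_self _).trans h
  rw [div_mul_eq_mul_div, le_div_iff₀ hD]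
  nlinarith [mul_nonneg hT0 (hsub x hx), hsuper x hx, mul_le_mul_of_nonneg_left hrate hTY]

namespace HasSecondDerivOn

variable {U U' U'' Y Y' Y'' f : ℝ → ℝ} {a b D : ℝ}

theorem rate_nonneg (hU : HasSecondDerivOn U U' U'' a b) (hab : a < b) (hD : 0 ≤ D)
    (hf : AntitoneOn f (Ici 0)) (hUa : U a = 0) (hUb : U b = 0)
    (hUpos : ∀ x ∈ Ioo a b, 0 < U x) (hsub : ∀ x ∈ Ioo a b, 0 ≤ D * U'' x + U x * f (U x)) :
    ∀ x ∈ Icc a b, 0 ≤ f (U x) := by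
  have hUnn := nonneg_Icc_of_pos_Ioo hUa hUb hUpos
  obtain ⟨xm, hxm, hmax⟩ := isCompact_Icc.exists_isMaxOn (nonempty_Icc.2 hab.le) hU.continuousOn
  have hmid : (a + b) / 2 ∈ Ioo a b := ⟨by linarith, by linarith⟩
  have hUxm : 0 < U xm := (hUpos _ hmid).trans_le (hmax (Ioo_subset_Icc_self hmid))
  have hxm' : xm ∈ Ioo a b :=
    ⟨hxm.1.lt_of_ne (by rintro rfl; linarith), hxm.2.lt_of_ne (by rintro rfl; linarith)⟩
  have h2 : U'' xm ≤ 0 := (hmax.isLocalMax (Icc_mem_nhds hxm'.1 hxm'.2)).hasDerivAt_deriv_nonpos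
    (eventually_of_mem (Ioo_mem_nhds hxm'.1 hxm'.2) hU.hasDerivAt) (hU.hasDerivAt_deriv xm hxm')
  have hfxm : 0 ≤ f (U xm) :=
    nonneg_of_mul_nonneg_right (by nlinarith [hsub xm hxm', mul_nonpos_of_nonneg_of_nonpos hD h2])
      hUxm
  exact fun x hx => hfxm.trans (hf (hUnn x hx) (hUnn xm hxm) (hmax hx))

theorem mul_lt_of_super_of_sub (hU : HasSecondDerivOn U U' U'' a b)
    (hY : HasSecondDerivOn Y Y' Y'' a b) (hD : 0 < D) (hf : StrictAntiOn f (Ici 0))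
    (hUpos : ∀ x ∈ Ioo a b, 0 < U x) (hsuper : ∀ x ∈ Ioo a b, D * U'' x + U x * f (U x) ≤ 0)
    (hsub : ∀ x ∈ Ioo a b, 0 ≤ D * Y'' x + Y x * f (Y x)) {T : ℝ} (hT0 : 0 ≤ T) (hT1 : T < 1)
    (hle : ∀ x ∈ Icc a b, T * Y x ≤ U x) : ∀ x ∈ Ioo a b, T * Y x < U x := by
  intro x hx
  by_contra! htouch
  have hUx : U x = T * Y x := le_antisymm htouch (hle x (Ioo_subset_Icc_self hx))
  have hmin : IsLocalMin (fun y => U y - T * Y y) x :=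
    eventually_of_mem (Icc_mem_nhds hx.1 hx.2) fun y hy => by simpa [hUx] using hle y hy
  have h2 : 0 ≤ U'' x - T * Y'' x := hmin.hasDerivAt_deriv_nonneg
    (eventually_of_mem (Ioo_mem_nhds hx.1 hx.2) (hU.sub (hY.const_mul T)).hasDerivAt)
    ((hU.sub (hY.const_mul T)).hasDerivAt_deriv x hx)
  have hTY : 0 < T * Y x := hUx ▸ hUpos x hx
  have hTYY : T * Y x < Y x := by nlinarith
  have hrate : f (Y x) < f (T * Y x) := hf hTY.le (hTY.le.trans hTYY.le) hTYY
  have hsuperx := hsuper x hx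
  rw [hUx] at hsuperx
  nlinarith [mul_nonneg hT0 (hsub x hx), mul_lt_mul_of_pos_left hrate hTY, mul_nonneg hD.le h2]

theorem le_of_super_of_sub (hU : HasSecondDerivOn U U' U'' a b)
    (hY : HasSecondDerivOn Y Y' Y'' a b) (hab : a < b) (hD : 0 < D) (hf : StrictAntiOn f (Ici 0))
    (hlip : LocallyLipschitzOn (Ici 0) fun u => u * f u) (hUa : U a = 0) (hUb : U b = 0)
    (hYa : Y a = 0) (hYb : Y b = 0) (hUpos : ∀ x ∈ Ioo a b, 0 < U x)
    (hYnn : ∀ x ∈ Icc a b, 0 ≤ Y x) (hsuper : ∀ x ∈ Ioo a b, D * U'' x + U x * f (U x) ≤ 0)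
    (hsub : ∀ x ∈ Ioo a b, 0 ≤ D * Y'' x + Y x * f (Y x)) : ∀ x ∈ Icc a b, Y x ≤ U x := by
  have hUnn := nonneg_Icc_of_pos_Ioo hUa hUb hUpos
  set S := {t ∈ Icc (0 : ℝ) 1 | ∀ x ∈ Icc a b, t * Y x ≤ U x}
  have hS0 : (0 : ℝ) ∈ S := ⟨left_mem_Icc.2 zero_le_one, fun x hx => by simpa using hUnn x hx⟩
  have hSbdd : BddAbove S := ⟨1, fun t ht => ht.1.2⟩
  have hSclosed : IsClosed S := by
    have h : IsClosed (Icc (0 : ℝ) 1 ∩ ⋂ x ∈ Icc a b, {t : ℝ | t * Y x ≤ U x}) :=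
      isClosed_Icc.inter (isClosed_biInter fun x _ => isClosed_le (by fun_prop) (by fun_prop))
    convert h using 1
    ext t
    simp [S]
  obtain ⟨⟨hT0, hT1⟩, hle⟩ : sSup S ∈ S := hSclosed.csSup_mem ⟨0, hS0⟩ hSbdd
  set T := sSup S
  suffices hT : T = 1 by simpa [hT] using hle
  by_contra hT
  have hTlt : T < 1 := hT1.lt_of_ne hT
  have hW := hU.sub (hY.const_mul T)
  have hWpos : ∀ x ∈ Ioo a b, 0 < U x - T * Y x := fun x hx => sub_pos.2 <|
    hU.mul_lt_of_super_of_sub hY hD hf hUpos hsuper hsub hT0 hTlt hle x hx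
  obtain ⟨K, hK0, hK⟩ := exists_deriv2_sub_le_mul hU.continuousOn hD hf.antitoneOn hlip hUnn hYnn
    hsuper hsub hT0 hT1 hle
  have hmid : ∃ x ∈ Icc a b, 0 < U x - T * Y x :=
    ⟨(a + b) / 2, ⟨by linarith, by linarith⟩, hWpos _ ⟨by linarith, by linarith⟩⟩
  obtain ⟨ε, hε, hεY⟩ := hW.exists_pos_mul_le hY.toHasContDerivOn hab.le
    (by simp [hUa, hYa]) (by simp [hUb, hYb]) hYa hYb hWpos hYnn
    (hW.deriv_left_pos hK0 (by simp [hUa, hYa]) hK hmid)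
    (hW.deriv_right_neg hK0 (by simp [hUb, hYb]) hK hmid)
  have hgrow : T + min ε (1 - T) ∈ S := by
    refine ⟨⟨by positivity, by linarith [min_le_right ε (1 - T)]⟩, fun x hx => ?_⟩
    nlinarith [hεY x hx, hle x hx, hYnn x hx, min_le_left ε (1 - T)]
  linarith [le_csSup hSbdd hgrow, lt_min hε (sub_pos.2 hTlt)]

end HasSecondDerivOn

theorem strictAntiOn_logistic {r h n : ℝ} (hh : 0 < h) (hn : 0 < n) :
    StrictAntiOn (fun u => r - (h * u) ^ n) (Ici 0) := fun _ hu _ _ huv =>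
  sub_lt_sub_left (rpow_lt_rpow (mul_nonneg hh.le hu) (mul_lt_mul_of_pos_left huv hh) hn) r

theorem locallyLipschitzOn_logistic {r h n : ℝ} (hh : 0 ≤ h) (hn : 0 ≤ n) :
    LocallyLipschitzOn (Ici 0) fun u => u * (r - (h * u) ^ n) := by
  have hsmooth : ContDiff ℝ 1 fun u : ℝ => r * u - h ^ n * u ^ (n + 1) :=
    (contDiff_const.mul contDiff_id).sub
      (contDiff_const.mul (contDiff_rpow_const_of_le (by norm_num; linarith)))
  refine (hsmooth.contDiffOn.congr fun u hu => ?_).locallyLipschitzOn (convex_Ici 0)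
  rw [mul_rpow hh hu, rpow_add' hu (by linarith), rpow_one]
  ring

theorem rpow_one_div_mul_rpow {ρ x n : ℝ} (hρ : 0 ≤ ρ) (hx : 0 ≤ x) (hn : n ≠ 0) :
    (ρ ^ (1 / n) * x) ^ n = ρ * x ^ n := by
  rw [mul_rpow (rpow_nonneg hρ _) hx, ← rpow_mul hρ, one_div_mul_cancel hn, rpow_one]

theorem rescaled_subsolution_nonneg {D₁ D₂ ρ A u u'' g : ℝ} (hD₁ : 0 < D₁) (hρ : D₂ / D₁ ≤ ρ)
    (hA : 0 ≤ A) (hu : 0 ≤ u) (hg : 0 ≤ g) (hode : D₁ * u'' + u * g = 0) :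
    0 ≤ D₂ * (A * u'') + A * u * (ρ * g) := by
  have hu'' : u'' = -(u * g) / D₁ := by
    rw [eq_div_iff hD₁.ne']
    linear_combination hode
  rw [hu'', show D₂ * (A * (-(u * g) / D₁)) + A * u * (ρ * g) = A * u * g * (ρ - D₂ / D₁) by ring]
  exact mul_nonneg (mul_nonneg (mul_nonneg hA hu) hg) (sub_nonneg.2 hρ)

theorem stmt11_general (D₁ D₂ r₁ r₂ hhat₁ hhat₂ ghat₂ n L₀ : ℝ)
    (hD₁ : 0 < D₁) (hD₂ : 0 < D₂) (hr₁ : 0 < r₁)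
    (hh₁ : 0 < hhat₁) (hh₂ : 0 < hhat₂) (hn : 0 < n) (hL₀ : 0 < L₀)
    (U₁ U₂ : ℝ → ℝ)
    (hreg₁ : ContDiffOn ℝ 2 U₁ (Icc 0 L₀)) (hreg₂ : ContDiffOn ℝ 2 U₂ (Icc 0 L₀))
    (hbc₁ : U₁ 0 = 0 ∧ U₁ L₀ = 0) (hbc₂ : U₂ 0 = 0 ∧ U₂ L₀ = 0)
    (hpos₁ : ∀ ξ ∈ Ioo 0 L₀, 0 < U₁ ξ) (hpos₂ : ∀ ξ ∈ Ioo 0 L₀, 0 < U₂ ξ)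
    (hode₁ : ∀ ξ ∈ Ioo 0 L₀,
      D₁ * deriv (deriv U₁) ξ + U₁ ξ * (r₁ - (hhat₁ * U₁ ξ) ^ n) = 0)
    (hode₂ : ∀ ξ ∈ Ioo 0 L₀,
      D₂ * deriv (deriv U₂) ξ + U₂ ξ * (r₂ - (hhat₂ * U₂ ξ) ^ n) = 0)
    (hrD : D₂ / D₁ ≤ r₂ / r₁)
    (hgh : ghat₂ ≤ (r₂ / r₁) ^ (1 / n) * hhat₁) :
    ∀ ξ ∈ Icc 0 L₀, ghat₂ * U₁ ξ ≤ hhat₂ * U₂ ξ := by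
  have hU₁ := hreg₁.hasSecondDerivOn hL₀
  have hU₁nn := nonneg_Icc_of_pos_Ioo hbc₁.1 hbc₁.2 hpos₁
  have hrate₁ := hU₁.rate_nonneg hL₀ hD₁.le (strictAntiOn_logistic hh₁ hn).antitoneOn hbc₁.1
    hbc₁.2 hpos₁ fun x hx => (hode₁ x hx).ge
  set ρ := r₂ / r₁
  have hρ : 0 < ρ := (div_pos hD₂ hD₁).trans_le hrD
  have hr₂ : r₂ = ρ * r₁ := (div_mul_cancel₀ r₂ hr₁.ne').symm
  set A := ρ ^ (1 / n) * hhat₁ / hhat₂ with hA_def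
  have hA : 0 ≤ A := div_nonneg (mul_nonneg (rpow_nonneg hρ.le _) hh₁.le) hh₂.le
  have hscale : ∀ u, hhat₂ * (A * u) = ρ ^ (1 / n) * (hhat₁ * u) := fun u => by
    rw [hA_def]
    field_simp
  have hrate₂ : ∀ u, 0 ≤ u → r₂ - (hhat₂ * (A * u)) ^ n = ρ * (r₁ - (hhat₁ * u) ^ n) :=
    fun u hu => by rw [hscale, rpow_one_div_mul_rpow hρ.le (mul_nonneg hh₁.le hu) hn.ne', hr₂]; ring
  have hcomp := (hreg₂.hasSecondDerivOn hL₀).le_of_super_of_sub (hU₁.const_mul A) hL₀ hD₂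
    (strictAntiOn_logistic hh₂ hn) (locallyLipschitzOn_logistic hh₂.le hn.le) hbc₂.1 hbc₂.2
    (by simp [hbc₁.1]) (by simp [hbc₁.2]) hpos₂ (fun x hx => mul_nonneg hA (hU₁nn x hx))
    (fun x hx => (hode₂ x hx).le) fun x hx => by
      rw [hrate₂ _ (hU₁nn x (Ioo_subset_Icc_self hx))]
      exact rescaled_subsolution_nonneg hD₁ hrD hA (hU₁nn x (Ioo_subset_Icc_self hx))
        (hrate₁ x (Ioo_subset_Icc_self hx)) (hode₁ x hx)
  intro ξ hξ
  calc ghat₂ * U₁ ξ ≤ ρ ^ (1 / n) * hhat₁ * U₁ ξ := mul_le_mul_of_nonneg_right hgh (hU₁nn ξ hξ)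
    _ = hhat₂ * (A * U₁ ξ) := by rw [hscale, mul_assoc]
    _ ≤ hhat₂ * U₂ ξ := mul_le_mul_of_nonneg_left (hcomp ξ hξ) hh₂.le

/-- Corollary 1, case c = 0, invasibility: `U₁`, `U₂` positive Dirichlet
stationary states of `Dᵢ Uᵢ'' + Uᵢ(rᵢ − (ĥᵢUᵢ)ⁿ) = 0` on `[0, L₀]`. If `r₂/r₁ ≥ D₂/D₁`
and `(r₂/r₁)^{1/n} ĥ₁ ≥ ĝ₂`, then `ĝ₂ U₁ ≤ ĥ₂ U₂` on `[0, L₀]`. -/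
theorem stmt11 (D₁ D₂ r₁ r₂ hhat₁ hhat₂ ghat₂ n L₀ : ℝ)
    (hD₁ : 0 < D₁) (hD₂ : 0 < D₂) (hr₁ : 0 < r₁) (hr₂ : 0 < r₂)
    (hh₁ : 0 < hhat₁) (hh₂ : 0 < hhat₂) (hg₂ : 0 < ghat₂) (hn : 0 < n) (hL₀ : 0 < L₀)
    (U₁ U₂ : ℝ → ℝ)
    (hreg₁ : ContDiffOn ℝ 2 U₁ (Icc 0 L₀)) (hreg₂ : ContDiffOn ℝ 2 U₂ (Icc 0 L₀))
    (hbc₁ : U₁ 0 = 0 ∧ U₁ L₀ = 0) (hbc₂ : U₂ 0 = 0 ∧ U₂ L₀ = 0)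
    (hpos₁ : ∀ ξ ∈ Ioo 0 L₀, 0 < U₁ ξ) (hpos₂ : ∀ ξ ∈ Ioo 0 L₀, 0 < U₂ ξ)
    (hode₁ : ∀ ξ ∈ Ioo 0 L₀,
      D₁ * deriv (deriv U₁) ξ + U₁ ξ * (r₁ - (hhat₁ * U₁ ξ) ^ n) = 0)
    (hode₂ : ∀ ξ ∈ Ioo 0 L₀,
      D₂ * deriv (deriv U₂) ξ + U₂ ξ * (r₂ - (hhat₂ * U₂ ξ) ^ n) = 0)
    (hrD : D₂ / D₁ ≤ r₂ / r₁)
    (hgh : ghat₂ ≤ (r₂ / r₁) ^ (1 / n) * hhat₁) :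
    ∀ ξ ∈ Icc 0 L₀, ghat₂ * U₁ ξ ≤ hhat₂ * U₂ ξ :=
  stmt11_general D₁ D₂ r₁ r₂ hhat₁ hhat₂ ghat₂ n L₀ hD₁ hD₂ hr₁ hh₁ hh₂ hn hL₀ U₁ U₂ hreg₁ hreg₂
    hbc₁ hbc₂ hpos₁ hpos₂ hode₁ hode₂ hrD hgh
end

section
/- Let D > 0, c ∈ ℝ, r₁, r₂ > 0, ĥ₁, ĥ₂, ĝ₂ > 0, n > 0 and L₀ > 0. Suppose U₁, U₂ : [0, L₀] → ℝ are twice continuously differentiable, with Uᵢ(0) = Uᵢ(L₀) = 0, Uᵢ(ξ) > 0 for ξ ∈ (0, L₀), D U₁''(ξ) + c U₁'(ξ) + U₁(ξ)(r₁ − (ĥ₁ U₁(ξ))ⁿ) = 0 and D U₂''(ξ) + c U₂'(ξ) + U₂(ξ)(r₂ − (ĥ₂ U₂(ξ))ⁿ) = 0 for all ξ ∈ (0, L₀). If r₂ ≥ r₁ and (r₂/r₁)^{1/n} ĥ₁ ≥ ĝ₂, then ĝ₂ U₁(ξ) ≤ ĥ₂ U₂(ξ) for all ξ ∈ [0, L₀].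 -/
/-!
Put `v = (r₂/r₁)^{1/n} ĥ₁ U₁` and `w = ĥ₂ U₂`. At an interior maximum of `ĥ₁ U₁` the equation
forces `(ĥ₁ U₁)ⁿ ≤ r₁`, and this bound makes `v` a subsolution of the equation
`D w'' + c w' + w (r₂ - wⁿ) = 0` solved by `w`. Since the per-capita rate `r₂ - sⁿ` is strictly
decreasing, `θ v` is a strict subsolution for `0 < θ < 1`, so it cannot touch `w` from below at
an interior point; Hopf's lemma at the two endpoints then shows that `θ v ≤ w` survives a small
increase of `θ`. Sliding `θ` from `0` to `1` gives `v ≤ w`, and `ĝ₂ ≤ (r₂/r₁)^{1/n} ĥ₁` finishes.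
-/

open Set Real Filter Topology

/-- The operator `D ∂² + c ∂` of the stationary problem in the moving frame `ξ = x - c t`. -/
noncomputable def driftDiffusionOp (D c : ℝ) (φ : ℝ → ℝ) (x : ℝ) : ℝ :=
  D * deriv (deriv φ) x + c * deriv φ x

section DriftDiffusionOp

variable {D c : ℝ}

lemma driftDiffusionOp_const_mul (k : ℝ) (φ : ℝ → ℝ) (x : ℝ) :
    driftDiffusionOp D c (fun y => k * φ y) x = k * driftDiffusionOp D c φ x := by
  simp only [driftDiffusionOp, deriv_const_mul_field']
  ring

lemma driftDiffusionOp_sub_const_mul {s : Set ℝ} (hs : IsOpen s) {f g : ℝ → ℝ}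
    (hf : ContDiffOn ℝ 2 f s) (hg : ContDiffOn ℝ 2 g s) (k : ℝ) {x : ℝ} (hx : x ∈ s) :
    driftDiffusionOp D c (fun y => f y - k * g y) x
      = driftDiffusionOp D c f x - k * driftDiffusionOp D c g x := by
  have hderiv : ∀ y ∈ s, deriv (fun y => f y - k * g y) y = deriv f y - k * deriv g y :=
    fun y hy => by
      have hfy := (hf.differentiableOn two_ne_zero).differentiableAt (hs.mem_nhds hy)
      have hgy := (hg.differentiableOn two_ne_zero).differentiableAt (hs.mem_nhds hy)
      rw [deriv_fun_sub hfy (hgy.const_mul k), deriv_const_mul_field]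
  have hf' := (hf.deriv_of_isOpen hs (m := 1) le_rfl).differentiableOn one_ne_zero
  have hg' := (hg.deriv_of_isOpen hs (m := 1) le_rfl).differentiableOn one_ne_zero
  have hderiv2 : deriv (deriv fun y => f y - k * g y) x
      = deriv (deriv f) x - k * deriv (deriv g) x := by
    rw [Filter.EventuallyEq.deriv_eq (eventually_of_mem (hs.mem_nhds hx) hderiv),
      deriv_fun_sub (hf'.differentiableAt (hs.mem_nhds hx))
        ((hg'.differentiableAt (hs.mem_nhds hx)).const_mul k), deriv_const_mul_field]
  simp only [driftDiffusionOp, hderiv2, hderiv x hx]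
  ring

lemma driftDiffusionOp_comp_const_sub (φ : ℝ → ℝ) (s x : ℝ) :
    driftDiffusionOp D (-c) (fun y => φ (s - y)) x = driftDiffusionOp D c φ (s - x) := by
  have hderiv : deriv (fun y => φ (s - y)) = fun y => -deriv φ (s - y) :=
    funext fun y => deriv_comp_const_sub φ s y
  simp only [driftDiffusionOp, hderiv, deriv.fun_neg, deriv_comp_const_sub (deriv φ)]
  ring

/-- If `f'' x₀ < 0`, the second derivative test makes `x₀` a local maximum as well, so `f` is
locally constant and `f'' x₀ = 0`; no differentiability is needed. -/
lemma IsLocalMin.deriv_deriv_nonneg {f : ℝ → ℝ} {x₀ : ℝ} (h : IsLocalMin f x₀)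
    (hc : ContinuousAt f x₀) : 0 ≤ deriv (deriv f) x₀ := by
  by_contra! hneg
  have hmax := isLocalMax_of_deriv_deriv_neg hneg h.deriv_eq_zero hc
  have hconst : f =ᶠ[𝓝 x₀] fun _ => f x₀ :=
    (h.and hmax).mono fun x hx => le_antisymm hx.2 hx.1
  have := hconst.deriv.deriv_eq
  simp only [deriv_const', deriv_const] at this
  linarith

lemma IsLocalMin.driftDiffusionOp_nonneg {φ : ℝ → ℝ} {x₀ : ℝ} (hD : 0 ≤ D)
    (h : IsLocalMin φ x₀) (hc : ContinuousAt φ x₀) : 0 ≤ driftDiffusionOp D c φ x₀ := by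
  rw [driftDiffusionOp, h.deriv_eq_zero, mul_zero, add_zero]
  exact mul_nonneg hD (h.deriv_deriv_nonneg hc)

lemma IsLocalMax.driftDiffusionOp_nonpos {φ : ℝ → ℝ} {x₀ : ℝ} (hD : 0 ≤ D)
    (h : IsLocalMax φ x₀) (hc : ContinuousAt φ x₀) : driftDiffusionOp D c φ x₀ ≤ 0 := by
  have := (h.neg.driftDiffusionOp_nonneg (c := c) hD hc.neg)
  have hneg := driftDiffusionOp_const_mul (D := D) (c := c) (-1) φ x₀
  simp only [neg_one_mul] at hneg
  linarith

end DriftDiffusionOp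

lemma nonneg_of_pos_of_eq_zero {a b : ℝ} {u : ℝ → ℝ} (hua : u a = 0) (hub : u b = 0)
    (hpos : ∀ x ∈ Ioo a b, 0 < u x) : ∀ x ∈ Icc a b, 0 ≤ u x := by
  intro x hx
  rcases hx.1.eq_or_lt with rfl | hax
  · exact hua.ge
  rcases hx.2.eq_or_lt with rfl | hxb
  · exact hub.ge
  exact (hpos x ⟨hax, hxb⟩).le

section MaximumPrinciple

variable {D c K a b : ℝ}

theorem nonneg_of_driftDiffusionOp_le {φ : ℝ → ℝ} (hD : 0 ≤ D) (hK : 0 < K)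
    (hφ : ContinuousOn φ (Icc a b)) (hφa : 0 ≤ φ a) (hφb : 0 ≤ φ b)
    (hL : ∀ x ∈ Ioo a b, driftDiffusionOp D c φ x ≤ K * φ x) :
    ∀ x ∈ Icc a b, 0 ≤ φ x := by
  intro x hx
  obtain ⟨x₀, hx₀, hmin⟩ := isCompact_Icc.exists_isMinOn ⟨x, hx⟩ hφ
  by_contra! hneg
  have hφx₀ : φ x₀ < 0 := (hmin hx).trans_lt hneg
  have hx₀' : x₀ ∈ Ioo a b :=
    ⟨hx₀.1.lt_of_ne (by rintro rfl; linarith), hx₀.2.lt_of_ne (by rintro rfl; linarith)⟩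
  have hnhds : Icc a b ∈ 𝓝 x₀ := Icc_mem_nhds hx₀'.1 hx₀'.2
  have := (hmin.isLocalMin hnhds).driftDiffusionOp_nonneg (c := c) hD (hφ.continuousAt hnhds)
  nlinarith [hL x₀ hx₀']

theorem rate_nonneg_of_subsolution {ρ u : ℝ → ℝ} (hD : 0 ≤ D) (hab : a < b)
    (hρ : AntitoneOn ρ (Ici 0)) (hu : ContinuousOn u (Icc a b)) (hua : u a = 0)
    (hub : u b = 0) (hpos : ∀ x ∈ Ioo a b, 0 < u x)
    (hsub : ∀ x ∈ Ioo a b, 0 ≤ driftDiffusionOp D c u x + u x * ρ (u x)) :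
    ∀ x ∈ Icc a b, 0 ≤ ρ (u x) := by
  obtain ⟨x₀, hx₀, hmax⟩ := isCompact_Icc.exists_isMaxOn (nonempty_Icc.2 hab.le) hu
  have hmid : (a + b) / 2 ∈ Ioo a b := ⟨by linarith, by linarith⟩
  have hu₀ : 0 < u x₀ := (hpos _ hmid).trans_le (hmax (Ioo_subset_Icc_self hmid))
  have hx₀' : x₀ ∈ Ioo a b :=
    ⟨hx₀.1.lt_of_ne (by rintro rfl; linarith), hx₀.2.lt_of_ne (by rintro rfl; linarith)⟩
  have hnhds : Icc a b ∈ 𝓝 x₀ := Icc_mem_nhds hx₀'.1 hx₀'.2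
  have hL := (hmax.isLocalMax hnhds).driftDiffusionOp_nonpos (c := c) hD (hu.continuousAt hnhds)
  have hρ₀ : 0 ≤ ρ (u x₀) := by
    by_contra! hneg
    nlinarith [hsub x₀ hx₀']
  have hu0 := nonneg_of_pos_of_eq_zero hua hub hpos
  exact fun x hx => hρ₀.trans (hρ (hu0 x hx) (hu0 x₀ hx₀) (hmax hx))

lemma hasDerivAt_exp_mul_sub (α a x : ℝ) :
    HasDerivAt (fun y => exp (α * (y - a))) (α * exp (α * (x - a))) x := by
  simpa [mul_comm] using (((hasDerivAt_id x).sub_const a).const_mul α).exp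

lemma driftDiffusionOp_exp_mul_sub_sub_one (α a x : ℝ) :
    driftDiffusionOp D c (fun y => exp (α * (y - a)) - 1) x
      = (D * α ^ 2 + c * α) * exp (α * (x - a)) := by
  have h1 : deriv (fun y => exp (α * (y - a)) - 1) = fun y => α * exp (α * (y - a)) :=
    funext fun y => ((hasDerivAt_exp_mul_sub α a y).sub_const 1).deriv
  have h2 : deriv (fun y => α * exp (α * (y - a))) x = α * (α * exp (α * (x - a))) :=
    ((hasDerivAt_exp_mul_sub α a x).const_mul α).deriv
  simp only [driftDiffusionOp, h1, h2]
  ring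

/-- Hopf's lemma: for `α` large, `ψ - η (exp (α (x - a)) - 1)` satisfies the weak minimum
principle. -/
theorem exists_mul_sub_le_of_driftDiffusionOp_le {ψ : ℝ → ℝ} (hD : 0 < D) (hK : 0 < K)
    (hab : a < b) (hψ : ContDiffOn ℝ 2 ψ (Ioo a b)) (hψc : ContinuousOn ψ (Icc a b))
    (hψa : ψ a = 0) (hψb : 0 < ψ b)
    (hL : ∀ x ∈ Ioo a b, driftDiffusionOp D c ψ x ≤ K * ψ x) :
    ∃ γ > 0, ∀ x ∈ Icc a b, γ * (x - a) ≤ ψ x := by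
  set α : ℝ := (|c| + K) / D + 1 with hα
  have hα1 : 1 ≤ α := le_add_of_nonneg_left (div_nonneg (add_nonneg (abs_nonneg c) hK.le) hD.le)
  have hDα : D * α = |c| + K + D := by rw [hα]; field_simp
  have hαK : K ≤ D * α ^ 2 + c * α := by
    nlinarith [neg_abs_le c]
  set z : ℝ → ℝ := fun y => exp (α * (y - a)) - 1 with hz
  have hzb : 0 < z b := by
    simp only [hz, sub_pos]
    exact one_lt_exp_iff.mpr (mul_pos (by linarith) (by linarith))
  set η := ψ b / z b with hη
  have hη0 : 0 < η := div_pos hψb hzb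
  have hz2 : ContDiffOn ℝ 2 z (Ioo a b) := by simp only [hz]; fun_prop
  have hbarrier : ∀ x ∈ Icc a b, 0 ≤ ψ x - η * z x := by
    refine nonneg_of_driftDiffusionOp_le hD.le hK (c := c)
      (hψc.sub (continuousOn_const.mul (by simp only [hz]; fun_prop))) ?_ ?_ ?_
    · simp [hψa, hz]
    · rw [hη, div_mul_cancel₀ _ hzb.ne', sub_self]
    · intro x hx
      rw [driftDiffusionOp_sub_const_mul isOpen_Ioo hψ hz2 η hx,
        driftDiffusionOp_exp_mul_sub_sub_one]
      have hexp := exp_pos (α * (x - a))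
      have : K * z x ≤ (D * α ^ 2 + c * α) * exp (α * (x - a)) := by
        simp only [hz]; nlinarith
      nlinarith [hL x hx]
  refine ⟨η, hη0, fun x hx => ?_⟩
  have hzx : x - a ≤ z x := by
    simp only [hz]
    nlinarith [add_one_le_exp (α * (x - a)), hx.1]
  nlinarith [hbarrier x hx]

theorem exists_mul_sub_le_of_driftDiffusionOp_le' {ψ : ℝ → ℝ} (hD : 0 < D) (hK : 0 < K)
    (hab : a < b) (hψ : ContDiffOn ℝ 2 ψ (Ioo a b)) (hψc : ContinuousOn ψ (Icc a b))
    (hψa : 0 < ψ a) (hψb : ψ b = 0)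
    (hL : ∀ x ∈ Ioo a b, driftDiffusionOp D c ψ x ≤ K * ψ x) :
    ∃ γ > 0, ∀ x ∈ Icc a b, γ * (b - x) ≤ ψ x := by
  have hIoo : MapsTo (fun y => a + b - y) (Ioo a b) (Ioo a b) :=
    fun y hy => ⟨by linarith [hy.2], by linarith [hy.1]⟩
  have hIcc : MapsTo (fun y => a + b - y) (Icc a b) (Icc a b) :=
    fun y hy => ⟨by linarith [hy.2], by linarith [hy.1]⟩
  obtain ⟨γ, hγ, hle⟩ := exists_mul_sub_le_of_driftDiffusionOp_le (c := -c) hD hK hab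
    (ψ := fun y => ψ (a + b - y)) (hψ.comp (by fun_prop) hIoo)
    (hψc.comp (by fun_prop) hIcc) (by simpa using hψb) (by simpa using hψa)
    (fun x hx => by
      rw [driftDiffusionOp_comp_const_sub]
      exact hL _ (hIoo hx))
  refine ⟨γ, hγ, fun x hx => ?_⟩
  have := hle (a + b - x) (hIcc hx)
  rwa [sub_sub_cancel, sub_right_comm, add_sub_cancel_left] at this

theorem exists_mul_min_le_of_driftDiffusionOp_le {ψ : ℝ → ℝ} (hD : 0 < D) (hK : 0 < K)
    (hab : a < b) (hψ : ContDiffOn ℝ 2 ψ (Ioo a b)) (hψc : ContinuousOn ψ (Icc a b))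
    (hψa : ψ a = 0) (hψb : ψ b = 0) (hpos : ∀ x ∈ Ioo a b, 0 < ψ x)
    (hL : ∀ x ∈ Ioo a b, driftDiffusionOp D c ψ x ≤ K * ψ x) :
    ∃ γ > 0, ∀ x ∈ Icc a b, γ * min (x - a) (b - x) ≤ ψ x := by
  set m := (a + b) / 2 with hm
  have ham : a < m := by rw [hm]; linarith
  have hmb : m < b := by rw [hm]; linarith
  have hψm := hpos m ⟨ham, hmb⟩
  obtain ⟨γ₁, hγ₁, hleft⟩ := exists_mul_sub_le_of_driftDiffusionOp_le hD hK ham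
    (hψ.mono (Ioo_subset_Ioo_right hmb.le)) (hψc.mono (Icc_subset_Icc_right hmb.le))
    hψa hψm fun x hx => hL x (Ioo_subset_Ioo_right hmb.le hx)
  obtain ⟨γ₂, hγ₂, hright⟩ := exists_mul_sub_le_of_driftDiffusionOp_le' hD hK hmb
    (hψ.mono (Ioo_subset_Ioo_left ham.le)) (hψc.mono (Icc_subset_Icc_left ham.le))
    hψm hψb fun x hx => hL x (Ioo_subset_Ioo_left ham.le hx)
  refine ⟨min γ₁ γ₂, lt_min hγ₁ hγ₂, fun x hx => ?_⟩
  have hdist : 0 ≤ min (x - a) (b - x) := le_min (sub_nonneg.2 hx.1) (sub_nonneg.2 hx.2)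
  rcases le_total x m with hxm | hmx
  · calc min γ₁ γ₂ * min (x - a) (b - x) ≤ γ₁ * (x - a) :=
          mul_le_mul (min_le_left _ _) (min_le_left _ _) hdist hγ₁.le
      _ ≤ ψ x := hleft x ⟨hx.1, hxm⟩
  · calc min γ₁ γ₂ * min (x - a) (b - x) ≤ γ₂ * (b - x) :=
          mul_le_mul (min_le_right _ _) (min_le_right _ _) hdist hγ₂.le
      _ ≤ ψ x := hright x ⟨hmx, hx.2⟩

end MaximumPrinciple

lemma LipschitzOnWith.le_mul_min_of_eq_zero {a b : ℝ} {v : ℝ → ℝ} {C : NNReal}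
    (hv : LipschitzOnWith C v (Icc a b)) (hva : v a = 0) (hvb : v b = 0) :
    ∀ x ∈ Icc a b, v x ≤ C * min (x - a) (b - x) := by
  intro x hx
  have ha := hv.dist_le_mul x hx a (left_mem_Icc.2 (hx.1.trans hx.2))
  have hb := hv.dist_le_mul x hx b (right_mem_Icc.2 (hx.1.trans hx.2))
  rw [Real.dist_eq, Real.dist_eq, hva, sub_zero, abs_of_nonneg (sub_nonneg.2 hx.1)] at ha
  rw [dist_comm x b, Real.dist_eq, Real.dist_eq, hvb, sub_zero,
    abs_of_nonneg (sub_nonneg.2 hx.2)] at hb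
  rw [mul_min_of_nonneg _ _ C.coe_nonneg]
  exact le_min ((le_abs_self _).trans ha) ((le_abs_self _).trans hb)

section Sweeping

variable {D c a b θ : ℝ} {ρ v w : ℝ → ℝ}

lemma driftDiffusionOp_sub_mul_le (hv : ContDiffOn ℝ 2 v (Ioo a b))
    (hw : ContDiffOn ℝ 2 w (Ioo a b)) (hθ : 0 ≤ θ)
    (hsub : ∀ x ∈ Ioo a b, 0 ≤ driftDiffusionOp D c v x + v x * ρ (v x))
    (hsuper : ∀ x ∈ Ioo a b, driftDiffusionOp D c w x + w x * ρ (w x) ≤ 0) :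
    ∀ x ∈ Ioo a b, driftDiffusionOp D c (fun y => w y - θ * v y) x
      ≤ θ * (v x * ρ (v x)) - w x * ρ (w x) := by
  intro x hx
  rw [driftDiffusionOp_sub_const_mul isOpen_Ioo hw hv θ hx]
  nlinarith [mul_nonneg hθ (hsub x hx), hsuper x hx]

lemma mul_lt_of_subsolution_of_supersolution (hD : 0 ≤ D) (hv : ContDiffOn ℝ 2 v (Ioo a b))
    (hw : ContDiffOn ℝ 2 w (Ioo a b)) (hvpos : ∀ x ∈ Ioo a b, 0 < v x)
    (hwpos : ∀ x ∈ Ioo a b, 0 < w x)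
    (hsub : ∀ x ∈ Ioo a b, 0 ≤ driftDiffusionOp D c v x + v x * ρ (v x))
    (hsuper : ∀ x ∈ Ioo a b, driftDiffusionOp D c w x + w x * ρ (w x) ≤ 0)
    (hρ : StrictAntiOn ρ (Ioi 0)) (hθ : θ ∈ Ico 0 1)
    (hθw : ∀ x ∈ Ioo a b, θ * v x ≤ w x) : ∀ x ∈ Ioo a b, θ * v x < w x := by
  intro x₀ hx₀
  by_contra! hle
  have heq : w x₀ = θ * v x₀ := le_antisymm hle (hθw x₀ hx₀)
  have hv₀ := hvpos x₀ hx₀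
  have hθpos : 0 < θ := hθ.1.lt_of_ne (by rintro rfl; linarith [hwpos x₀ hx₀])
  have hnhds := isOpen_Ioo.mem_nhds hx₀
  have hmin : IsLocalMin (fun y => w y - θ * v y) x₀ := by
    filter_upwards [hnhds] with y hy
    linarith [hθw y hy]
  have hcont : ContinuousAt (fun y => w y - θ * v y) x₀ :=
    (hw.sub (contDiffOn_const.mul hv)).continuousOn.continuousAt hnhds
  have hρlt : ρ (v x₀) < ρ (θ * v x₀) :=
    hρ (mul_pos hθpos hv₀) hv₀ (by nlinarith [hθ.2])
  have := (hmin.driftDiffusionOp_nonneg (c := c) hD hcont).trans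
    (driftDiffusionOp_sub_mul_le hv hw hθ.1 hsub hsuper x₀ hx₀)
  rw [heq] at this
  nlinarith [mul_pos hθpos hv₀]

lemma driftDiffusionOp_sub_mul_le_mul {K M : ℝ} (hv : ContDiffOn ℝ 2 v (Ioo a b))
    (hw : ContDiffOn ℝ 2 w (Ioo a b)) (hvpos : ∀ x ∈ Ioo a b, 0 < v x)
    (hsub : ∀ x ∈ Ioo a b, 0 ≤ driftDiffusionOp D c v x + v x * ρ (v x))
    (hsuper : ∀ x ∈ Ioo a b, driftDiffusionOp D c w x + w x * ρ (w x) ≤ 0)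
    (hρ : AntitoneOn ρ (Ioi 0)) (hK : MonotoneOn (fun s => s * ρ s + K * s) (Icc 0 M))
    (hwM : ∀ x ∈ Ioo a b, w x ≤ M) (hθ : θ ∈ Icc 0 1)
    (hθw : ∀ x ∈ Ioo a b, θ * v x ≤ w x) :
    ∀ x ∈ Ioo a b, driftDiffusionOp D c (fun y => w y - θ * v y) x ≤ K * (w x - θ * v x) := by
  intro x hx
  have hvx := hvpos x hx
  have hθv : 0 ≤ θ * v x := mul_nonneg hθ.1 hvx.le
  have hscale : θ * (v x * ρ (v x)) ≤ θ * v x * ρ (θ * v x) := by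
    rcases hθ.1.eq_or_lt with rfl | hθpos
    · simp
    have := hρ (mul_pos hθpos hvx) hvx (by nlinarith [hθ.2])
    nlinarith
  have hlip := hK ⟨hθv, (hθw x hx).trans (hwM x hx)⟩ ⟨hθv.trans (hθw x hx), hwM x hx⟩ (hθw x hx)
  linarith [driftDiffusionOp_sub_mul_le hv hw hθ.1 hsub hsuper x hx]

lemma exists_pos_add_mul_le (hD : 0 < D) (hab : a < b) (hv : ContDiffOn ℝ 2 v (Icc a b))
    (hw : ContDiffOn ℝ 2 w (Icc a b)) (hva : v a = 0) (hvb : v b = 0) (hwa : w a = 0)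
    (hwb : w b = 0) (hvpos : ∀ x ∈ Ioo a b, 0 < v x) (hwpos : ∀ x ∈ Ioo a b, 0 < w x)
    (hsub : ∀ x ∈ Ioo a b, 0 ≤ driftDiffusionOp D c v x + v x * ρ (v x))
    (hsuper : ∀ x ∈ Ioo a b, driftDiffusionOp D c w x + w x * ρ (w x) ≤ 0)
    (hρ : StrictAntiOn ρ (Ioi 0))
    (hρK : ∀ M, ∃ K, MonotoneOn (fun s => s * ρ s + K * s) (Icc 0 M))
    (hθ : θ ∈ Ico 0 1) (hθw : ∀ x ∈ Icc a b, θ * v x ≤ w x) :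
    ∃ ε > 0, ∀ x ∈ Icc a b, (θ + ε) * v x ≤ w x := by
  have hv' := hv.mono Ioo_subset_Icc_self
  have hw' := hw.mono Ioo_subset_Icc_self
  have hθw' : ∀ x ∈ Ioo a b, θ * v x ≤ w x := fun x hx => hθw x (Ioo_subset_Icc_self hx)
  obtain ⟨M, hM⟩ := (isCompact_Icc.image_of_continuousOn hw.continuousOn).bddAbove
  obtain ⟨K, hK⟩ := hρK M
  have hL : ∀ x ∈ Ioo a b, driftDiffusionOp D c (fun y => w y - θ * v y) x
      ≤ max K 1 * (w x - θ * v x) := fun x hx =>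
    (driftDiffusionOp_sub_mul_le_mul hv' hw' hvpos hsub hsuper hρ.antitoneOn hK
      (fun y hy => hM (mem_image_of_mem w (Ioo_subset_Icc_self hy))) (Ico_subset_Icc_self hθ)
      hθw' x hx).trans
      (mul_le_mul_of_nonneg_right (le_max_left _ _) (sub_nonneg.2 (hθw' x hx)))
  obtain ⟨γ, hγ, hψ⟩ := exists_mul_min_le_of_driftDiffusionOp_le hD
    (lt_max_of_lt_right one_pos) hab (hw'.sub (contDiffOn_const.mul hv'))
    (hw.continuousOn.sub (continuousOn_const.mul hv.continuousOn))
    (by simp [hva, hwa]) (by simp [hvb, hwb])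
    (fun x hx => sub_pos.2 (mul_lt_of_subsolution_of_supersolution hD.le hv' hw' hvpos hwpos
      hsub hsuper hρ hθ hθw' x hx)) hL
  obtain ⟨C, hC⟩ := hv.exists_lipschitzOnWith two_ne_zero (convex_Icc a b) isCompact_Icc
  have hC1 : (0 : ℝ) < C + 1 := by positivity
  refine ⟨γ / (C + 1), by positivity, fun x hx => ?_⟩
  have hvx := hC.le_mul_min_of_eq_zero hva hvb x hx
  have hdist : 0 ≤ min (x - a) (b - x) := le_min (sub_nonneg.2 hx.1) (sub_nonneg.2 hx.2)
  have hεv : γ / (C + 1) * v x ≤ γ * min (x - a) (b - x) := by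
    calc γ / (C + 1) * v x ≤ γ / (C + 1) * ((C + 1) * min (x - a) (b - x)) := by
          gcongr; nlinarith
      _ = γ * min (x - a) (b - x) := by field_simp
  linarith [hψ x hx]

/-- Sliding comparison: `θ v ≤ w` holds for `θ = 0`, the set of such `θ` is closed, and by
`exists_pos_add_mul_le` it can always be pushed past any `θ < 1`. -/
theorem le_of_subsolution_of_supersolution (hD : 0 < D) (hab : a < b)
    (hv : ContDiffOn ℝ 2 v (Icc a b)) (hw : ContDiffOn ℝ 2 w (Icc a b)) (hva : v a = 0)
    (hvb : v b = 0) (hwa : w a = 0) (hwb : w b = 0) (hvpos : ∀ x ∈ Ioo a b, 0 < v x)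
    (hwpos : ∀ x ∈ Ioo a b, 0 < w x)
    (hsub : ∀ x ∈ Ioo a b, 0 ≤ driftDiffusionOp D c v x + v x * ρ (v x))
    (hsuper : ∀ x ∈ Ioo a b, driftDiffusionOp D c w x + w x * ρ (w x) ≤ 0)
    (hρ : StrictAntiOn ρ (Ioi 0))
    (hρK : ∀ M, ∃ K, MonotoneOn (fun s => s * ρ s + K * s) (Icc 0 M)) :
    ∀ x ∈ Icc a b, v x ≤ w x := by
  set S : Set ℝ := {θ | ∀ x ∈ Icc a b, θ * v x ≤ w x}
  have hS : IsClosed (S ∩ Icc 0 1) := by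
    refine IsClosed.inter ?_ isClosed_Icc
    simp only [S, Set.ofPred_forall]
    exact isClosed_biInter fun x _ => isClosed_le (by fun_prop) continuous_const
  have hS0 : (0 : ℝ) ∈ S := fun x hx => by
    simpa using nonneg_of_pos_of_eq_zero hwa hwb hwpos x hx
  have hv0 := nonneg_of_pos_of_eq_zero hva hvb hvpos
  have hstep : ∀ θ ∈ S ∩ Ico 0 1, ∀ θ' ∈ Ioi θ, (S ∩ Ioc θ θ').Nonempty := by
    rintro θ ⟨hθS, hθ⟩ θ' hθ'
    obtain ⟨ε, hε, hεS⟩ := exists_pos_add_mul_le hD hab hv hw hva hvb hwa hwb hvpos hwpos hsub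
      hsuper hρ hρK hθ hθS
    have hδ : 0 < min ε (θ' - θ) := lt_min hε (sub_pos.2 hθ')
    refine ⟨θ + min ε (θ' - θ), fun x hx => ?_, by linarith, by linarith [min_le_right ε (θ' - θ)]⟩
    calc (θ + min ε (θ' - θ)) * v x ≤ (θ + ε) * v x := by
          gcongr
          · exact hv0 x hx
          · exact min_le_left _ _
      _ ≤ w x := hεS x hx
  intro x hx
  simpa using hS.Icc_subset_of_forall_exists_gt hS0 hstep (right_mem_Icc.2 zero_le_one) x hx

end Sweeping

lemma strictAntiOn_sub_rpow (r : ℝ) {n : ℝ} (hn : 0 < n) :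
    StrictAntiOn (fun s : ℝ => r - s ^ n) (Ici 0) := fun _ hs _ ht hst =>
  sub_lt_sub_left (strictMonoOn_rpow_Ici_of_exponent_pos hn hs ht hst) r

lemma exists_monotoneOn_mul_sub_rpow_add_mul (r : ℝ) {n : ℝ} (hn : 0 < n) (M : ℝ) :
    ∃ K, MonotoneOn (fun s : ℝ => s * (r - s ^ n) + K * s) (Icc 0 M) := by
  refine ⟨(1 + n) * M ^ n - r, ?_⟩
  have hderiv : ∀ s : ℝ, HasDerivAt (fun s : ℝ => (1 + n) * M ^ n * s - s ^ (1 + n))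
      ((1 + n) * M ^ n - (1 + n) * s ^ n) s := fun s => by
    have := Real.hasDerivAt_rpow_const (x := s) (p := 1 + n) (Or.inr (by linarith))
    rw [add_sub_cancel_left] at this
    simpa using ((hasDerivAt_id' s).const_mul ((1 + n) * M ^ n)).fun_sub this
  have hmono : MonotoneOn (fun s : ℝ => (1 + n) * M ^ n * s - s ^ (1 + n)) (Icc 0 M) := by
    refine monotoneOn_of_deriv_nonneg (convex_Icc 0 M)
      (fun s _ => (hderiv s).continuousAt.continuousWithinAt)
      (fun s _ => (hderiv s).differentiableAt.differentiableWithinAt) fun s hs => ?_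
    rw [interior_Icc] at hs
    rw [(hderiv s).deriv]
    have := rpow_le_rpow hs.1.le hs.2.le hn.le
    nlinarith
  intro s hs t ht hst
  have := hmono hs ht hst
  simp only at this ⊢
  rw [rpow_one_add' hs.1 (by linarith), rpow_one_add' ht.1 (by linarith)] at this
  linarith

lemma logistic_subsolution_of_const_mul {D c r₁ r₂ n κ x : ℝ} {u : ℝ → ℝ} (hr₁ : 0 < r₁)
    (hr : r₁ ≤ r₂) (hκ : 0 ≤ κ) (hκn : κ ^ n = r₂ / r₁) (hu : 0 ≤ u x) (hun : u x ^ n ≤ r₁)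
    (hode : driftDiffusionOp D c u x + u x * (r₁ - u x ^ n) = 0) :
    0 ≤ driftDiffusionOp D c (fun y => κ * u y) x + κ * u x * (r₂ - (κ * u x) ^ n) := by
  have hL : driftDiffusionOp D c u x = -(u x * (r₁ - u x ^ n)) := by linarith
  have hsum : driftDiffusionOp D c (fun y => κ * u y) x + κ * u x * (r₂ - (κ * u x) ^ n)
      = κ * u x * ((r₂ - r₁) * (r₁ - u x ^ n) / r₁) := by
    rw [driftDiffusionOp_const_mul, hL, mul_rpow hκ hu, hκn]
    field_simp
    ring
  rw [hsum]
  exact mul_nonneg (mul_nonneg hκ hu)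
    (div_nonneg (mul_nonneg (sub_nonneg.2 hr) (sub_nonneg.2 hun)) hr₁.le)

theorem stmt13_general (D c r₁ r₂ hhat₁ hhat₂ ghat₂ n L₀ : ℝ)
    (hD : 0 < D) (hr₁ : 0 < r₁)
    (hh₁ : 0 < hhat₁) (hh₂ : 0 < hhat₂) (hn : 0 < n) (hL₀ : 0 < L₀)
    (U₁ U₂ : ℝ → ℝ)
    (hreg₁ : ContDiffOn ℝ 2 U₁ (Icc 0 L₀)) (hreg₂ : ContDiffOn ℝ 2 U₂ (Icc 0 L₀))
    (hbc₁ : U₁ 0 = 0 ∧ U₁ L₀ = 0) (hbc₂ : U₂ 0 = 0 ∧ U₂ L₀ = 0)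
    (hpos₁ : ∀ ξ ∈ Ioo 0 L₀, 0 < U₁ ξ) (hpos₂ : ∀ ξ ∈ Ioo 0 L₀, 0 < U₂ ξ)
    (hode₁ : ∀ ξ ∈ Ioo 0 L₀,
      D * deriv (deriv U₁) ξ + c * deriv U₁ ξ + U₁ ξ * (r₁ - (hhat₁ * U₁ ξ) ^ n) = 0)
    (hode₂ : ∀ ξ ∈ Ioo 0 L₀,
      D * deriv (deriv U₂) ξ + c * deriv U₂ ξ + U₂ ξ * (r₂ - (hhat₂ * U₂ ξ) ^ n) = 0)
    (hr : r₁ ≤ r₂)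
    (hgh : ghat₂ ≤ (r₂ / r₁) ^ (1 / n) * hhat₁) :
    ∀ ξ ∈ Icc 0 L₀, ghat₂ * U₁ ξ ≤ hhat₂ * U₂ ξ := by
  obtain ⟨hU₁0, hU₁L⟩ := hbc₁
  obtain ⟨hU₂0, hU₂L⟩ := hbc₂
  have hU₁ := nonneg_of_pos_of_eq_zero hU₁0 hU₁L hpos₁
  set κ := (r₂ / r₁) ^ (1 / n) with hκ_def
  have hrr : 0 < r₂ / r₁ := div_pos (hr₁.trans_le hr) hr₁
  have hκ : 0 < κ := rpow_pos_of_pos hrr _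
  have hκn : κ ^ n = r₂ / r₁ := by rw [hκ_def, one_div, rpow_inv_rpow hrr.le hn.ne']
  have hu₁_ode : ∀ ξ ∈ Ioo 0 L₀, driftDiffusionOp D c (fun y => hhat₁ * U₁ y) ξ
      + hhat₁ * U₁ ξ * (r₁ - (hhat₁ * U₁ ξ) ^ n) = 0 := fun ξ hξ => by
    rw [driftDiffusionOp_const_mul, driftDiffusionOp]
    linear_combination hhat₁ * hode₁ ξ hξ
  have hu₁_le : ∀ ξ ∈ Icc 0 L₀, (hhat₁ * U₁ ξ) ^ n ≤ r₁ := fun ξ hξ =>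
    sub_nonneg.1 <| rate_nonneg_of_subsolution hD.le hL₀ (strictAntiOn_sub_rpow r₁ hn).antitoneOn
      (continuousOn_const.mul hreg₁.continuousOn) (by simp [hU₁0]) (by simp [hU₁L])
      (fun x hx => mul_pos hh₁ (hpos₁ x hx)) (fun x hx => (hu₁_ode x hx).ge) ξ hξ
  have hvw := le_of_subsolution_of_supersolution (c := c) (ρ := fun s => r₂ - s ^ n)
    (v := fun ξ => κ * (hhat₁ * U₁ ξ)) (w := fun ξ => hhat₂ * U₂ ξ) hD hL₀
    (contDiffOn_const.mul (contDiffOn_const.mul hreg₁)) (contDiffOn_const.mul hreg₂)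
    (by simp [hU₁0]) (by simp [hU₁L]) (by simp [hU₂0]) (by simp [hU₂L])
    (fun x hx => mul_pos hκ (mul_pos hh₁ (hpos₁ x hx))) (fun x hx => mul_pos hh₂ (hpos₂ x hx))
    (fun x hx => logistic_subsolution_of_const_mul (u := fun y => hhat₁ * U₁ y) hr₁ hr hκ.le hκn
      (mul_nonneg hh₁.le (hU₁ x (Ioo_subset_Icc_self hx))) (hu₁_le x (Ioo_subset_Icc_self hx))
      (hu₁_ode x hx))
    (fun x hx => by
      rw [driftDiffusionOp_const_mul, driftDiffusionOp]
      linear_combination hhat₂ * hode₂ x hx)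
    ((strictAntiOn_sub_rpow r₂ hn).mono Ioi_subset_Ici_self)
    (exists_monotoneOn_mul_sub_rpow_add_mul r₂ hn)
  intro ξ hξ
  calc ghat₂ * U₁ ξ ≤ κ * hhat₁ * U₁ ξ := mul_le_mul_of_nonneg_right hgh (hU₁ ξ hξ)
    _ = κ * (hhat₁ * U₁ ξ) := mul_assoc _ _ _
    _ ≤ hhat₂ * U₂ ξ := hvw ξ hξ

/-- Corollary 1, case D₁ = D₂ = D, invasibility: `U₁`, `U₂` positive
Dirichlet stationary states of `D Uᵢ'' + c Uᵢ' + Uᵢ(rᵢ − (ĥᵢUᵢ)ⁿ) = 0` on `[0, L₀]`.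
If `r₂ ≥ r₁` and `(r₂/r₁)^{1/n} ĥ₁ ≥ ĝ₂`, then `ĝ₂ U₁ ≤ ĥ₂ U₂` on `[0, L₀]`. -/
theorem stmt13 (D c r₁ r₂ hhat₁ hhat₂ ghat₂ n L₀ : ℝ)
    (hD : 0 < D) (hr₁ : 0 < r₁) (hr₂ : 0 < r₂)
    (hh₁ : 0 < hhat₁) (hh₂ : 0 < hhat₂) (hg₂ : 0 < ghat₂) (hn : 0 < n) (hL₀ : 0 < L₀)
    (U₁ U₂ : ℝ → ℝ)
    (hreg₁ : ContDiffOn ℝ 2 U₁ (Icc 0 L₀)) (hreg₂ : ContDiffOn ℝ 2 U₂ (Icc 0 L₀))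
    (hbc₁ : U₁ 0 = 0 ∧ U₁ L₀ = 0) (hbc₂ : U₂ 0 = 0 ∧ U₂ L₀ = 0)
    (hpos₁ : ∀ ξ ∈ Ioo 0 L₀, 0 < U₁ ξ) (hpos₂ : ∀ ξ ∈ Ioo 0 L₀, 0 < U₂ ξ)
    (hode₁ : ∀ ξ ∈ Ioo 0 L₀,
      D * deriv (deriv U₁) ξ + c * deriv U₁ ξ + U₁ ξ * (r₁ - (hhat₁ * U₁ ξ) ^ n) = 0)
    (hode₂ : ∀ ξ ∈ Ioo 0 L₀,
      D * deriv (deriv U₂) ξ + c * deriv U₂ ξ + U₂ ξ * (r₂ - (hhat₂ * U₂ ξ) ^ n) = 0)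
    (hr : r₁ ≤ r₂)
    (hgh : ghat₂ ≤ (r₂ / r₁) ^ (1 / n) * hhat₁) :
    ∀ ξ ∈ Icc 0 L₀, ghat₂ * U₁ ξ ≤ hhat₂ * U₂ ξ :=
  stmt13_general D c r₁ r₂ hhat₁ hhat₂ ghat₂ n L₀ hD hr₁ hh₁ hh₂ hn hL₀ U₁ U₂ hreg₁ hreg₂ hbc₁ hbc₂
    hpos₁ hpos₂ hode₁ hode₂ hr hgh
end

section
/- Let D > 0, let l : ℝ → ℝ be twice continuously differentiable and 1-periodic with l(s) > 0 for all s, and let a : ℝ → ℝ be twice continuously differentiable and 1-periodic. For ω > 0 set T = 2π/ω, L(t) = l(ωt/(2π)) and A(t) = a(ωt/(2π)), and define Q̲(t) = −min_{0 ≤ η ≤ 1} (η² L''(t) L(t)/2 + η A''(t) L(t)). Then (1/T)∫₀^T (Dπ²/L(t)² + A'(t)²/(4D) + Q̲(t)/(2D)) dt converges to ∫₀¹ Dπ²/l(s)² ds as ω → 0⁺. Consequently, for any constants β̂ and r₂ with r₂ > β̂ + ∫₀¹ Dπ²/l(s)² ds, one has r₂ ≥ β̂ + (1/T)∫₀^T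 (Dπ²/L(t)² + A'(t)²/(4D) + Q̲(t)/(2D)) dt for all sufficiently small ω > 0. -/
/-!
Substituting `s = ωt/(2π)` turns the time average over one period `T = 2π/ω` into an average
over one period of the profiles, and the chain rule pulls out a factor `(ω/(2π))²` from every
second-order time derivative and `(ω/(2π))` from `A'`. Since the minimum over `η` is positively
homogeneous, this gives the exact identity
`I(ω) = ∫₀¹ Dπ²/l² + (ω/(2π))² ∫₀¹ (a'²/(4D) - m(l''l, a''l)/(2D))`, where
`m(u, v) = min_{0 ≤ η ≤ 1} (η² u/2 + η v)` depends continuously on `(u, v)`.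
The limit `ω → 0⁺` and the invasion criterion follow at once.
-/

open Set Real Filter

noncomputable def quadMin (u v : ℝ) : ℝ :=
  sInf ((fun η : ℝ => η ^ 2 * u / 2 + η * v) '' Icc 0 1)

theorem continuous_quadMin : Continuous fun p : ℝ × ℝ => quadMin p.1 p.2 :=
  isCompact_Icc.continuous_sInf (f := fun (p : ℝ × ℝ) (η : ℝ) => η ^ 2 * p.1 / 2 + η * p.2)
    (by fun_prop)

theorem sInf_image_mul_quadratic {k : ℝ} (hk : 0 ≤ k) (u v w : ℝ) :
    sInf ((fun η : ℝ => η ^ 2 * (k * u) * w / 2 + η * (k * v) * w) '' Icc 0 1)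
      = k * quadMin (u * w) (v * w) := by
  have hfun : (fun η : ℝ => η ^ 2 * (k * u) * w / 2 + η * (k * v) * w)
      = (fun x => k • x) ∘ fun η : ℝ => η ^ 2 * (u * w) / 2 + η * (v * w) := by
    funext η
    simp only [Function.comp_apply, smul_eq_mul]
    ring
  rw [hfun, image_comp, image_smul, Real.sInf_smul_of_nonneg hk, smul_eq_mul, quadMin]

theorem deriv_deriv_comp_mul_left (f : ℝ → ℝ) (c x : ℝ) :
    deriv (deriv fun y => f (c * y)) x = c ^ 2 * deriv (deriv f) (c * x) := by
  have hfirst : (deriv fun y => f (c * y)) = fun y => c * deriv f (c * y) :=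
    funext fun y => deriv_comp_mul_left (f := f) c y
  rw [hfirst, deriv_const_mul_field, deriv_comp_mul_left, smul_eq_mul]
  ring

theorem mul_integral_comp_mul_left (f : ℝ → ℝ) {c : ℝ} (hc : c ≠ 0) :
    c * ∫ t in (0 : ℝ)..c⁻¹, f (c * t) = ∫ s in (0 : ℝ)..1, f s := by
  rw [intervalIntegral.integral_comp_mul_left f hc, mul_zero, mul_inv_cancel₀ hc, smul_eq_mul,
    mul_inv_cancel_left₀ hc]

theorem continuous_deriv_of_contDiff_two {f : ℝ → ℝ} (hf : ContDiff ℝ 2 f) :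
    Continuous (deriv f) :=
  hf.continuous_deriv (by norm_num)

theorem continuous_deriv_deriv_of_contDiff_two {f : ℝ → ℝ} (hf : ContDiff ℝ 2 f) :
    Continuous (deriv (deriv f)) := by
  rw [show (2 : WithTop ℕ∞) = 1 + 1 by norm_num, contDiff_succ_iff_deriv] at hf
  exact hf.2.2.continuous_deriv le_rfl

section SlowOscillation

variable (D : ℝ) (l a : ℝ → ℝ)

noncomputable def secondOrderCorrection (s : ℝ) : ℝ :=
  deriv a s ^ 2 / (4 * D)
    - quadMin (deriv (deriv l) s * l s) (deriv (deriv a) s * l s) / (2 * D)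

theorem integrand_comp_mul_left (c t : ℝ) :
    D * π ^ 2 / l (c * t) ^ 2 + (deriv (fun τ => a (c * τ)) t) ^ 2 / (4 * D)
        + -sInf ((fun η : ℝ =>
              η ^ 2 * deriv (deriv fun τ => l (c * τ)) t * l (c * t) / 2
                + η * deriv (deriv fun τ => a (c * τ)) t * l (c * t)) '' Icc 0 1) / (2 * D)
      = D * π ^ 2 / l (c * t) ^ 2 + c ^ 2 * secondOrderCorrection D l a (c * t) := by
  rw [deriv_comp_mul_left, deriv_deriv_comp_mul_left, deriv_deriv_comp_mul_left,
    sInf_image_mul_quadratic (sq_nonneg c), secondOrderCorrection, smul_eq_mul]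
  ring

theorem continuous_secondOrderCorrection (hl : ContDiff ℝ 2 l) (ha : ContDiff ℝ 2 a) :
    Continuous (secondOrderCorrection D l a) := by
  have hquad : Continuous fun s =>
      quadMin (deriv (deriv l) s * l s) (deriv (deriv a) s * l s) :=
    continuous_quadMin.comp
      (((continuous_deriv_deriv_of_contDiff_two hl).mul hl.continuous).prodMk
        ((continuous_deriv_deriv_of_contDiff_two ha).mul hl.continuous))
  exact (((continuous_deriv_of_contDiff_two ha).pow 2).div_const _).sub (hquad.div_const _)

end SlowOscillation

theorem stmt19_general (D : ℝ)
    (l a : ℝ → ℝ) (hl : ContDiff ℝ 2 l) (ha : ContDiff ℝ 2 a)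
    (hlpos : ∀ s : ℝ, 0 < l s)
    (I : ℝ → ℝ)
    (hI : ∀ ω : ℝ, 0 < ω →
      I ω = (1 / (2 * π / ω)) * ∫ t in (0 : ℝ)..(2 * π / ω),
        (D * π ^ 2 / (l (ω * t / (2 * π))) ^ 2
          + (deriv (fun τ => a (ω * τ / (2 * π))) t) ^ 2 / (4 * D)
          + (-sInf ((fun η : ℝ =>
                η ^ 2 * deriv (deriv (fun τ => l (ω * τ / (2 * π)))) t
                    * l (ω * t / (2 * π)) / 2
                  + η * deriv (deriv (fun τ => a (ω * τ / (2 * π)))) t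
                    * l (ω * t / (2 * π))) '' Icc (0 : ℝ) 1))
              / (2 * D))) :
    Tendsto I (nhdsWithin 0 (Ioi 0))
        (nhds (∫ s in (0 : ℝ)..1, D * π ^ 2 / (l s) ^ 2)) ∧
      ∀ βhat r₂ : ℝ, βhat + (∫ s in (0 : ℝ)..1, D * π ^ 2 / (l s) ^ 2) < r₂ →
        ∀ᶠ ω in nhdsWithin 0 (Ioi 0), βhat + I ω ≤ r₂ := by
  set C₀ := ∫ s in (0 : ℝ)..1, D * π ^ 2 / l s ^ 2
  set C₁ := ∫ s in (0 : ℝ)..1, secondOrderCorrection D l a s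
  have hG : Continuous fun s => D * π ^ 2 / l s ^ 2 :=
    continuous_const.div (hl.continuous.pow 2) fun s => pow_ne_zero 2 (hlpos s).ne'
  have hH := continuous_secondOrderCorrection D l a hl ha
  have hI_eq : ∀ ω, 0 < ω → I ω = C₀ + (ω / (2 * π)) ^ 2 * C₁ := by
    intro ω hω
    have hc : ω / (2 * π) ≠ 0 := by positivity
    rw [hI ω hω, one_div_div, ← inv_div ω (2 * π)]
    simp only [mul_div_right_comm ω, integrand_comp_mul_left]
    rw [mul_integral_comp_mul_left (fun s => D * π ^ 2 / l s ^ 2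
        + (ω / (2 * π)) ^ 2 * secondOrderCorrection D l a s) hc,
      intervalIntegral.integral_add (hG.intervalIntegrable 0 1)
        ((hH.intervalIntegrable 0 1).const_mul _), intervalIntegral.integral_const_mul]
  have hlim : Tendsto I (nhdsWithin 0 (Ioi 0)) (nhds C₀) := by
    have hpoly : Tendsto (fun ω : ℝ => C₀ + (ω / (2 * π)) ^ 2 * C₁) (nhds 0) (nhds C₀) := by
      simpa using ((by fun_prop : Continuous fun ω : ℝ => C₀ + (ω / (2 * π)) ^ 2 * C₁).tendsto 0)
    refine (hpoly.mono_left nhdsWithin_le_nhds).congr' ?_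
    filter_upwards [self_mem_nhdsWithin] with ω hω
    exact (hI_eq ω hω).symm
  refine ⟨hlim, fun βhat r₂ hr₂ => ?_⟩
  filter_upwards [hlim.eventually_lt_const (show C₀ < r₂ - βhat by linarith)] with ω hω
  linarith

/-- Example 3: with `T = 2π/ω`, `L(t) = l(ωt/(2π))`, `A(t) = a(ωt/(2π))`
for 1-periodic profiles `l > 0` and `a`, and
`Q̲(t) = −min_{0≤η≤1} (η² L''(t)L(t)/2 + η A''(t)L(t))`, the quantity
`I(ω) = (1/T)∫₀ᵀ (Dπ²/L(t)² + A'(t)²/(4D) + Q̲(t)/(2D)) dt` tends to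
`∫₀¹ Dπ²/l(s)² ds` as `ω → 0⁺`; consequently, whenever
`r₂ > β̂ + ∫₀¹ Dπ²/l(s)² ds`, one has `r₂ ≥ β̂ + I(ω)` for all sufficiently small
`ω > 0`. -/
theorem stmt19 (D : ℝ) (hD : 0 < D)
    (l a : ℝ → ℝ) (hl : ContDiff ℝ 2 l) (ha : ContDiff ℝ 2 a)
    (hlper : ∀ s : ℝ, l (s + 1) = l s) (haper : ∀ s : ℝ, a (s + 1) = a s)
    (hlpos : ∀ s : ℝ, 0 < l s)
    (I : ℝ → ℝ)
    (hI : ∀ ω : ℝ, 0 < ω →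
      I ω = (1 / (2 * π / ω)) * ∫ t in (0 : ℝ)..(2 * π / ω),
        (D * π ^ 2 / (l (ω * t / (2 * π))) ^ 2
          + (deriv (fun τ => a (ω * τ / (2 * π))) t) ^ 2 / (4 * D)
          + (-sInf ((fun η : ℝ =>
                η ^ 2 * deriv (deriv (fun τ => l (ω * τ / (2 * π)))) t
                    * l (ω * t / (2 * π)) / 2
                  + η * deriv (deriv (fun τ => a (ω * τ / (2 * π)))) t
                    * l (ω * t / (2 * π))) '' Icc (0 : ℝ) 1))
              / (2 * D))) :
    Tendsto I (nhdsWithin 0 (Ioi 0))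
        (nhds (∫ s in (0 : ℝ)..1, D * π ^ 2 / (l s) ^ 2)) ∧
      ∀ βhat r₂ : ℝ, βhat + (∫ s in (0 : ℝ)..1, D * π ^ 2 / (l s) ^ 2) < r₂ →
        ∀ᶠ ω in nhdsWithin 0 (Ioi 0), βhat + I ω ≤ r₂ :=
  stmt19_general D l a hl ha hlpos I hI
end
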